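/- arXiv:math/0406279 — 11 statements merged into one kernel-verified Lean document; each statement's English description precedes it below -/
import Mathlib

section
/- Let n ≥ 1 and let A be an n×n (0,1)-matrix with zero permanent, i.e., for every permutation σ of {0,…,n−1} there exists an index i with the (i, σ(i)) entry of A equal to 0. Then A has an r×s zero submatrix with r + s = n + 1: there exist subsets I, J ⊆ {0,…,n−1} with |I| + |J| = n + 1 such that the (i,j) entry of A is 0 for all i ∈ I and j ∈ J. -/
/-! By Hall's marriage theorem, a matrix without a permutation along nonzero entries has a set `S`
of rows whose nonzero entries lie in a set `N` of fewer than `|S|` columns. Then any `|N| + 1`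
rows of `S` together with the `n - |N|` columns outside `N` form the zero block. -/

open Finset Function

section
variable {ι κ : Type*} [Fintype κ] (A : ι → κ → Prop)

open Classical in
theorem exists_zero_block_of_card_lt {S : Finset ι} (hS : #{j | ∃ i ∈ S, A i j} < #S) :
    ∃ (I : Finset ι) (J : Finset κ), #I + #J = Fintype.card κ + 1 ∧
      ∀ i ∈ I, ∀ j ∈ J, ¬ A i j := by
  set N : Finset κ := {j | ∃ i ∈ S, A i j}
  obtain ⟨I, hIS, hI⟩ := exists_subset_card_eq (Nat.succ_le_of_lt hS)
  refine ⟨I, Nᶜ, ?_, fun i hi j hj hij ↦ mem_compl.mp hj ?_⟩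
  · rw [card_compl, hI]
    have := N.card_le_univ
    omega
  · exact mem_filter.mpr ⟨mem_univ j, i, hIS hi, hij⟩

theorem exists_zero_block_of_not_exists_injective
    (h : ¬ ∃ f : ι → κ, Injective f ∧ ∀ i, A i (f i)) :
    ∃ (I : Finset ι) (J : Finset κ), #I + #J = Fintype.card κ + 1 ∧
      ∀ i ∈ I, ∀ j ∈ J, ¬ A i j := by
  classical
  obtain ⟨S, hS⟩ : ∃ S : Finset ι, #{j | ∃ i ∈ S, A i j} < #S := by
    simpa using mt (Fintype.all_card_le_filter_rel_iff_exists_injective A).mp h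
  exact exists_zero_block_of_card_lt A hS

end

theorem frobenius_konig_general (n : ℕ) (A : Fin n → Fin n → Prop)
    (hperm : ∀ σ : Equiv.Perm (Fin n), ∃ i : Fin n, ¬ A i (σ i)) :
    ∃ I J : Finset (Fin n), I.Nonempty ∧ J.Nonempty ∧ I.card + J.card = n + 1 ∧
      ∀ i ∈ I, ∀ j ∈ J, ¬ A i j := by
  have no_transversal : ¬ ∃ f : Fin n → Fin n, Injective f ∧ ∀ i, A i (f i) := by
    rintro ⟨f, hf, hA⟩
    obtain ⟨i, hi⟩ := hperm (Equiv.ofBijective f (Finite.injective_iff_bijective.mp hf))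
    exact hi (hA i)
  obtain ⟨I, J, hcard, hzero⟩ := exists_zero_block_of_not_exists_injective A no_transversal
  have hI := I.card_le_univ
  have hJ := J.card_le_univ
  simp only [Fintype.card_fin] at hcard hI hJ
  exact ⟨I, J, card_pos.mp (by omega), card_pos.mp (by omega), hcard, hzero⟩

/-- **Frobenius–König theorem.** Let `n ≥ 1` and let `A` be an `n × n` (0,1)-matrix
(identified with a predicate `A : Fin n → Fin n → Prop`, where `A i j` holds iff the
`(i,j)` entry is `1`) with zero permanent, i.e. for every permutation `σ` of `Fin n`
there is an index `i` with the `(i, σ i)` entry equal to `0`. Then `A` has an `r × s`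
zero submatrix with `r + s = n + 1`: there are subsets `I, J ⊆ Fin n` with
`|I| + |J| = n + 1` such that the `(i,j)` entry of `A` is `0` for all `i ∈ I`, `j ∈ J`. -/
theorem frobenius_konig (n : ℕ) (hn : 1 ≤ n) (A : Fin n → Fin n → Prop)
    (hperm : ∀ σ : Equiv.Perm (Fin n), ∃ i : Fin n, ¬ A i (σ i)) :
    ∃ I J : Finset (Fin n), I.Nonempty ∧ J.Nonempty ∧ I.card + J.card = n + 1 ∧
      ∀ i ∈ I, ∀ j ∈ J, ¬ A i j :=
  frobenius_konig_general n A hperm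
end

section
/- Let A be an (n+1)×(n+1) (0,1)-matrix. If J₁ and J₂ are admissible colorings for A, then J₁ ∪ J₂ is an admissible coloring for A or J₁ ∩ J₂ is an admissible coloring for A. -/
/-!
Write `Iₖ × Jₖ` for the zero blocks witnessing admissibility of `Jₖ`. Both `(I₁ ∩ I₂) × (J₁ ∪ J₂)`
and `(I₁ ∪ I₂) × (J₁ ∩ J₂)` are again zero blocks, and by inclusion–exclusion their four side
lengths add up to `|I₁| + |J₁| + |I₂| + |J₂| = 2 (n + 2)`. Hence one of them has half-perimeter at
least `n + 2`, and shrinking its row set makes it a witness of the required size.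
-/

/-- For an `(n+1) × (n+1)` (0,1)-matrix `A` (identified with a predicate
`A : Fin (n+1) → Fin (n+1) → Prop`, where `A i j` holds iff the `(i,j)` entry is `1`),
a nonempty subset `J ⊆ {0, …, n}` is an *admissible coloring* for `A` if there is a
nonempty subset `I ⊆ {0, …, n}` with `|I| + |J| = n + 2` such that the `(i,j)` entry
of `A` is `0` for all `i ∈ I`, `j ∈ J`. -/
def IsAdmissible {n : ℕ} (A : Fin (n + 1) → Fin (n + 1) → Prop)
    (J : Finset (Fin (n + 1))) : Prop :=
  J.Nonempty ∧ ∃ I : Finset (Fin (n + 1)), I.Nonempty ∧ I.card + J.card = n + 2 ∧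
    ∀ i ∈ I, ∀ j ∈ J, ¬ A i j

open Finset

def IsZeroBlock {α β : Type*} (A : α → β → Prop) (I : Finset α) (J : Finset β) : Prop :=
  ∀ i ∈ I, ∀ j ∈ J, ¬ A i j

section ZeroBlock

variable {α β : Type*} {A : α → β → Prop}

lemma IsZeroBlock.mono_left {I I' : Finset α} {J : Finset β} (h : IsZeroBlock A I J)
    (hI : I' ⊆ I) : IsZeroBlock A I' J :=
  fun i hi => h i (hI hi)

variable [DecidableEq α] [DecidableEq β] {I₁ I₂ : Finset α} {J₁ J₂ : Finset β}

lemma IsZeroBlock.inter_union (h₁ : IsZeroBlock A I₁ J₁) (h₂ : IsZeroBlock A I₂ J₂) :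
    IsZeroBlock A (I₁ ∩ I₂) (J₁ ∪ J₂) := by
  intro i hi j hj
  rcases mem_union.mp hj with hj | hj
  · exact h₁ i (mem_inter.mp hi).1 j hj
  · exact h₂ i (mem_inter.mp hi).2 j hj

lemma IsZeroBlock.union_inter (h₁ : IsZeroBlock A I₁ J₁) (h₂ : IsZeroBlock A I₂ J₂) :
    IsZeroBlock A (I₁ ∪ I₂) (J₁ ∩ J₂) := by
  intro i hi j hj
  rcases mem_union.mp hi with hi | hi
  · exact h₁ i hi j (mem_inter.mp hj).1
  · exact h₂ i hi j (mem_inter.mp hj).2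

end ZeroBlock

lemma isAdmissible_of_isZeroBlock {n : ℕ} {A : Fin (n + 1) → Fin (n + 1) → Prop}
    {I J : Finset (Fin (n + 1))} (hz : IsZeroBlock A I J) (hc : n + 2 ≤ #I + #J) :
    IsAdmissible A J := by
  have hI : #I ≤ n + 1 := by simpa using card_le_univ I
  have hJ : #J ≤ n + 1 := by simpa using card_le_univ J
  obtain ⟨I', hI'I, hI'⟩ := exists_subset_card_eq (show n + 2 - #J ≤ #I by omega)
  exact ⟨card_pos.mp (by omega), I', card_pos.mp (by omega), by omega, hz.mono_left hI'I⟩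

/-- If `J₁` and `J₂` are admissible colorings for `A`, then `J₁ ∪ J₂` is an admissible
coloring for `A` or `J₁ ∩ J₂` is an admissible coloring for `A`. -/
theorem admissible_union_or_inter {n : ℕ} (A : Fin (n + 1) → Fin (n + 1) → Prop)
    (J₁ J₂ : Finset (Fin (n + 1))) (h₁ : IsAdmissible A J₁) (h₂ : IsAdmissible A J₂) :
    IsAdmissible A (J₁ ∪ J₂) ∨ IsAdmissible A (J₁ ∩ J₂) := by
  obtain ⟨-, I₁, -, hc₁, hz₁⟩ := h₁
  obtain ⟨-, I₂, -, hc₂, hz₂⟩ := h₂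
  have hI := card_inter_add_card_union I₁ I₂
  have hJ := card_inter_add_card_union J₁ J₂
  by_cases hc : n + 2 ≤ #(I₁ ∩ I₂) + #(J₁ ∪ J₂)
  · exact .inl (isAdmissible_of_isZeroBlock (IsZeroBlock.inter_union hz₁ hz₂) hc)
  · exact .inr (isAdmissible_of_isZeroBlock (IsZeroBlock.union_inter hz₁ hz₂) (by omega))
end

section
/- Let A be an (n+1)×(n+1) (0,1)-matrix. Suppose J₁ and J₂ are admissible colorings for A such that J₁ ∪ J₂ is NOT an admissible coloring for A. Then for every element k ∈ J₁ ∩ J₂, the set (J₁ ∩ J₂) \ {k} is a (nonempty) admissible coloring for A. -/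
open Finset

namespace IsZeroBlock

variable {α β : Type*} {A : α → β → Prop} {I I' I₁ I₂ : Finset α} {J J' J₁ J₂ : Finset β}

theorem mono (h : IsZeroBlock A I J) (hI : I' ⊆ I) (hJ : J' ⊆ J) : IsZeroBlock A I' J' :=
  fun i hi j hj => h i (hI hi) j (hJ hj)

theorem inter_union_s2 [DecidableEq α] [DecidableEq β] (h₁ : IsZeroBlock A I₁ J₁)
    (h₂ : IsZeroBlock A I₂ J₂) : IsZeroBlock A (I₁ ∩ I₂) (J₁ ∪ J₂) := by
  intro i hi j hj
  rcases mem_union.mp hj with hj₁ | hj₂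
  · exact h₁ i (mem_inter.mp hi).1 j hj₁
  · exact h₂ i (mem_inter.mp hi).2 j hj₂

theorem union_inter_s2 [DecidableEq α] [DecidableEq β] (h₁ : IsZeroBlock A I₁ J₁)
    (h₂ : IsZeroBlock A I₂ J₂) : IsZeroBlock A (I₁ ∪ I₂) (J₁ ∩ J₂) := by
  intro i hi j hj
  rcases mem_union.mp hi with hi₁ | hi₂
  · exact h₁ i hi₁ j (mem_inter.mp hj).1
  · exact h₂ i hi₂ j (mem_inter.mp hj).2

end IsZeroBlock

section Admissible

variable {n : ℕ} {A : Fin (n + 1) → Fin (n + 1) → Prop} {I J : Finset (Fin (n + 1))}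

theorem card_le_succ (s : Finset (Fin (n + 1))) : #s ≤ n + 1 :=
  (card_le_univ s).trans_eq (Fintype.card_fin _)

theorem isAdmissible_of_le_card_add_card (hJ : J.Nonempty) (hIJ : IsZeroBlock A I J)
    (hcard : n + 2 ≤ #I + #J) : IsAdmissible A J := by
  have hJ_le := card_le_succ J
  obtain ⟨I', hI'I, hI'_card⟩ := exists_subset_card_eq (show n + 2 - #J ≤ #I by omega)
  exact ⟨hJ, I', card_pos.mp (by omega), by omega, hIJ.mono hI'I subset_rfl⟩

theorem card_add_card_le_of_not_isAdmissible (hJ : J.Nonempty) (hIJ : IsZeroBlock A I J)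
    (hnot : ¬ IsAdmissible A J) : #I + #J ≤ n + 1 :=
  Nat.le_of_lt_succ <| not_le.mp fun hcard => hnot (isAdmissible_of_le_card_add_card hJ hIJ hcard)

end Admissible

/-- If `J₁` and `J₂` are admissible colorings for `A` such that `J₁ ∪ J₂` is *not* an
admissible coloring for `A`, then for every `k ∈ J₁ ∩ J₂`, the set `(J₁ ∩ J₂) \ {k}`
is a (nonempty) admissible coloring for `A`. -/
theorem admissible_inter_erase {n : ℕ} (A : Fin (n + 1) → Fin (n + 1) → Prop)
    (J₁ J₂ : Finset (Fin (n + 1))) (h₁ : IsAdmissible A J₁) (h₂ : IsAdmissible A J₂)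
    (hunion : ¬ IsAdmissible A (J₁ ∪ J₂)) :
    ∀ k ∈ J₁ ∩ J₂, IsAdmissible A ((J₁ ∩ J₂).erase k) := by
  intro k hk
  obtain ⟨hJ₁, I₁, -, hc₁, hz₁⟩ := h₁
  obtain ⟨-, I₂, -, hc₂, hz₂⟩ := h₂
  have h_union_small : #(I₁ ∩ I₂) + #(J₁ ∪ J₂) ≤ n + 1 :=
    card_add_card_le_of_not_isAdmissible (hJ₁.mono subset_union_left)
      (IsZeroBlock.inter_union_s2 hz₁ hz₂) hunion
  have hI := card_union_add_card_inter I₁ I₂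
  have hJ := card_union_add_card_inter J₁ J₂
  have hI_le := card_le_succ (I₁ ∪ I₂)
  have h_erase := card_erase_of_mem hk
  have h_block : IsZeroBlock A (I₁ ∪ I₂) ((J₁ ∩ J₂).erase k) :=
    (IsZeroBlock.union_inter_s2 hz₁ hz₂).mono subset_rfl (erase_subset k _)
  exact isAdmissible_of_le_card_add_card (card_pos.mp (by omega)) h_block (by omega)
end

section
/- Let A be an (n+1)×(n+1) (0,1)-matrix with zero permanent, and let 𝒥 be the collection of all admissible colorings for A, partially ordered by inclusion (𝒥 is nonempty by the Frobenius–König theorem). Let c be the union of all minimal elements of 𝒥 and let C be the intersection of all maximal elements of 𝒥. Then c ∈ 𝒥, C ∈ 𝒥, and c ⊆ C. -/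
/-- `J` is a minimal (w.r.t. inclusion) admissible coloring for `A`. -/
def IsMinimalColoring {n : ℕ} (A : Fin (n + 1) → Fin (n + 1) → Prop)
    (J : Finset (Fin (n + 1))) : Prop :=
  IsAdmissible A J ∧ ∀ J' : Finset (Fin (n + 1)), IsAdmissible A J' → J' ⊆ J → J' = J

/-- `J` is a maximal (w.r.t. inclusion) admissible coloring for `A`. -/
def IsMaximalColoring {n : ℕ} (A : Fin (n + 1) → Fin (n + 1) → Prop)
    (J : Finset (Fin (n + 1))) : Prop :=
  IsAdmissible A J ∧ ∀ J' : Finset (Fin (n + 1)), IsAdmissible A J' → J ⊆ J' → J' = J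

/-!
The function `f J = #(rows vanishing on J) + #J` is supermodular, and `J` is admissible exactly
when `f J ≥ n + 2`. Hence for admissible `J₁, J₂` at least one of `J₁ ∩ J₂`, `J₁ ∪ J₂` is
admissible. For such a family, a maximal admissible subset of `c` must absorb every minimal
admissible set (otherwise the union or the intersection would contradict maximality or
minimality), so it equals `c`; dually for `C`. Frobenius–König (Hall) makes the family nonempty.
-/

open Finset

section

variable {α : Type*} [DecidableEq α]

def InterOrUnionClosed (P : Finset α → Prop) : Prop :=
  ∀ ⦃s t⦄, P s → P t → P (s ∩ t) ∨ P (s ∪ t)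

theorem Finset.subset_of_minimal_of_maximal {Q R : Finset α → Prop} {s t : Finset α}
    (hs : Minimal Q s) (ht : Maximal R t) (h : Q (s ∩ t) ∨ R (s ∪ t)) : s ⊆ t := by
  rcases h with h | h
  · exact (subset_inter_iff.1 (hs.2 h inter_subset_left)).2
  · exact (union_subset_iff.1 (ht.2 h subset_union_right)).1

namespace InterOrUnionClosed

variable {P : Finset α → Prop}

theorem minimal_subset_maximal (hP : InterOrUnionClosed P) {s t : Finset α} (hs : Minimal P s)
    (ht : Maximal P t) : s ⊆ t :=
  subset_of_minimal_of_maximal hs ht (hP hs.1 ht.1)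

theorem of_mem_iff_exists_minimal (hP : InterOrUnionClosed P) (hne : ∃ s, P s)
    {c : Finset α} (hc : ∀ x, x ∈ c ↔ ∃ s, Minimal P s ∧ x ∈ s) : P c := by
  have minimal_subset {s} (hs : Minimal P s) : s ⊆ c := fun x hx => (hc x).2 ⟨s, hs, hx⟩
  obtain ⟨s₀, hs₀⟩ := exists_minimal_of_wellFoundedLT P hne
  have hfin : {K | P K ∧ K ⊆ c}.Finite :=
    c.powerset.finite_toSet.subset fun K hK => mem_powerset.2 hK.2
  obtain ⟨K, -, hK⟩ := hfin.exists_le_maximal (a := s₀) ⟨hs₀.1, minimal_subset hs₀⟩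
  suffices c ⊆ K from subset_antisymm hK.1.2 this ▸ hK.1.1
  intro x hx
  obtain ⟨s, hs, hxs⟩ := (hc x).1 hx
  refine subset_of_minimal_of_maximal hs hK ?_ hxs
  exact (hP hs.1 hK.1.1).imp_right fun h => ⟨h, union_subset (minimal_subset hs) hK.1.2⟩

theorem of_mem_iff_forall_maximal [Finite α] (hP : InterOrUnionClosed P) (hne : ∃ s, P s)
    {C : Finset α} (hC : ∀ x, x ∈ C ↔ ∀ t, Maximal P t → x ∈ t) : P C := by
  have subset_maximal {t} (ht : Maximal P t) : C ⊆ t := fun x hx => (hC x).1 hx t ht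
  obtain ⟨s₀, hs₀⟩ := hne
  obtain ⟨t₀, -, ht₀⟩ := Finite.exists_le_maximal hs₀
  obtain ⟨K, hK⟩ := exists_minimal_of_wellFoundedLT (fun K => P K ∧ C ⊆ K)
    ⟨t₀, ht₀.1, subset_maximal ht₀⟩
  suffices K ⊆ C from subset_antisymm this hK.1.2 ▸ hK.1.1
  intro x hx
  refine (hC x).2 fun t ht => subset_of_minimal_of_maximal hK ht ?_ hx
  exact (hP hK.1.1 ht.1).imp_left fun h => ⟨h, subset_inter hK.1.2 (subset_maximal ht)⟩

end InterOrUnionClosed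

end

section ZeroRows

variable {ι κ : Type*} [Fintype ι]

open Classical in
noncomputable def zeroRows (A : ι → κ → Prop) (J : Finset κ) : Finset ι :=
  univ.filter fun i => ∀ j ∈ J, ¬ A i j

variable {A : ι → κ → Prop}

@[simp]
theorem mem_zeroRows {J : Finset κ} {i : ι} : i ∈ zeroRows A J ↔ ∀ j ∈ J, ¬ A i j := by
  simp [zeroRows]

theorem zeroRows_anti {s t : Finset κ} (h : s ⊆ t) : zeroRows A t ⊆ zeroRows A s :=
  fun _ hi => mem_zeroRows.2 fun j hj => mem_zeroRows.1 hi j (h hj)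

-- Frobenius–König, via Hall's marriage theorem applied to the supports of the columns.
theorem exists_card_lt_card_zeroRows_add_card {A : ι → ι → Prop}
    (hperm : ∀ σ : Equiv.Perm ι, ∃ i, ¬ A i (σ i)) :
    ∃ J : Finset ι, Fintype.card ι < #(zeroRows A J) + #J := by
  classical
  let support (j : ι) : Finset ι := univ.filter fun i => A i j
  by_cases hall : ∀ J : Finset ι, #J ≤ #(J.biUnion support)
  · obtain ⟨f, hf, hfA⟩ := (all_card_le_biUnion_card_iff_existsInjective' support).1 hall
    let e := Equiv.ofBijective f (Finite.injective_iff_bijective.1 hf)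
    obtain ⟨i, hi⟩ := hperm e.symm
    have := hfA (e.symm i)
    simp only [support, mem_filter, mem_univ, true_and] at this
    rw [show f (e.symm i) = i from e.apply_symm_apply i] at this
    exact absurd this hi
  · push Not at hall
    obtain ⟨J, hJ⟩ := hall
    have hcompl : zeroRows A J = (J.biUnion support)ᶜ := by
      ext i
      simp [support]
    refine ⟨J, ?_⟩
    rw [hcompl, card_compl]
    have := card_le_univ (J.biUnion support)
    omega

variable [DecidableEq ι] [DecidableEq κ]

theorem zeroRows_union (s t : Finset κ) :
    zeroRows A (s ∪ t) = zeroRows A s ∩ zeroRows A t := by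
  ext i
  simp only [mem_zeroRows, mem_union, mem_inter, or_imp, forall_and]

theorem card_zeroRows_add_card_zeroRows_le (s t : Finset κ) :
    #(zeroRows A s) + #(zeroRows A t) ≤ #(zeroRows A (s ∪ t)) + #(zeroRows A (s ∩ t)) := by
  have hinter : zeroRows A s ∪ zeroRows A t ⊆ zeroRows A (s ∩ t) :=
    union_subset (zeroRows_anti inter_subset_left) (zeroRows_anti inter_subset_right)
  rw [zeroRows_union, ← card_union_add_card_inter, add_comm]
  exact Nat.add_le_add_left (card_le_card hinter) _

end ZeroRows

section Admissible

variable {n : ℕ} {A : Fin (n + 1) → Fin (n + 1) → Prop}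

theorem isAdmissible_iff_card {J : Finset (Fin (n + 1))} :
    IsAdmissible A J ↔ n + 2 ≤ #(zeroRows A J) + #J := by
  have hJ := card_le_univ J
  have hZ := card_le_univ (zeroRows A J)
  simp only [Fintype.card_fin] at hJ hZ
  constructor
  · rintro ⟨-, I, -, hcard, hI⟩
    have := card_le_card fun i hi => mem_zeroRows.2 (hI i hi)
    omega
  · intro h
    obtain ⟨I, hIZ, hI⟩ :=
      exists_subset_card_eq (s := zeroRows A J) (n := n + 2 - #J) (by omega)
    refine ⟨card_pos.1 (by omega), I, card_pos.1 (by omega), by omega, ?_⟩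
    exact fun i hi => mem_zeroRows.1 (hIZ hi)

theorem interOrUnionClosed_isAdmissible : InterOrUnionClosed (IsAdmissible A) := by
  intro s t hs ht
  simp only [isAdmissible_iff_card] at *
  have := card_zeroRows_add_card_zeroRows_le (A := A) s t
  have := card_union_add_card_inter s t
  omega

theorem isMinimalColoring_iff {J : Finset (Fin (n + 1))} :
    IsMinimalColoring A J ↔ Minimal (IsAdmissible A) J := by
  simp only [IsMinimalColoring, minimal_iff, eq_comm (a := J)]

theorem isMaximalColoring_iff {J : Finset (Fin (n + 1))} :
    IsMaximalColoring A J ↔ Maximal (IsAdmissible A) J := by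
  simp only [IsMaximalColoring, maximal_iff, eq_comm (a := J)]

end Admissible

/-- Let `A` be an `(n+1) × (n+1)` (0,1)-matrix with zero permanent. Let `c` be the
union of all minimal admissible colorings of `A` and `C` the intersection of all
maximal admissible colorings of `A`. Then `c` and `C` are themselves admissible
colorings of `A`, and `c ⊆ C`. -/
theorem canonical_colorings_admissible {n : ℕ} (A : Fin (n + 1) → Fin (n + 1) → Prop)
    (hperm : ∀ σ : Equiv.Perm (Fin (n + 1)), ∃ i : Fin (n + 1), ¬ A i (σ i))
    (c C : Finset (Fin (n + 1)))
    (hc : ∀ x : Fin (n + 1), x ∈ c ↔ ∃ J : Finset (Fin (n + 1)),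
      IsMinimalColoring A J ∧ x ∈ J)
    (hC : ∀ x : Fin (n + 1), x ∈ C ↔ ∀ J : Finset (Fin (n + 1)),
      IsMaximalColoring A J → x ∈ J) :
    IsAdmissible A c ∧ IsAdmissible A C ∧ c ⊆ C := by
  simp only [isMinimalColoring_iff] at hc
  simp only [isMaximalColoring_iff] at hC
  have hP := interOrUnionClosed_isAdmissible (A := A)
  have hne : ∃ J, IsAdmissible A J := by
    obtain ⟨J, hJ⟩ := exists_card_lt_card_zeroRows_add_card hperm
    exact ⟨J, isAdmissible_iff_card.2 (Nat.succ_le_of_lt (by simpa using hJ))⟩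
  refine ⟨hP.of_mem_iff_exists_minimal hne hc, hP.of_mem_iff_forall_maximal hne hC, ?_⟩
  intro x hx
  obtain ⟨s, hs, hxs⟩ := (hc x).1 hx
  exact (hC x).2 fun t ht => hP.minimal_subset_maximal hs ht hxs
end

section
/- Let A, A′, A″ be (n+1)×(n+1) (0,1)-matrices with zero permanent. (1) Suppose every zero entry of A′ is also a zero entry of A (i.e., for all i, j, if the (i,j) entry of A′ is 0 then the (i,j) entry of A is 0), and suppose {k} is the unique admissible coloring of A. Then {k} is the unique admissible coloring of A′. (2) Suppose the singleton {k} is an admissible coloring of A″. Then k belongs to every maximal admissible coloring of A″; in particular k belongs to the maximal canonical coloring of A″. -/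
/-!
By Frobenius–König, a matrix with zero permanent has an admissible coloring. Since every zero
block of `A'` is a zero block of `A`, that coloring is admissible for `A` too, hence is `{k}`.
For the second part, `{k}` admissible means column `k` vanishes. If a maximal coloring `J` missed
`k`, then `|J| ≤ n`, so its row set has at least two rows; dropping one of them and adding the
column `k` gives a strictly larger admissible coloring.
-/

open Finset

theorem exists_card_lt_of_forall_perm_exists_not {ι : Type*} [Fintype ι]
    (r : ι → ι → Prop) (hperm : ∀ σ : Equiv.Perm ι, ∃ i, ¬ r i (σ i)) :
    ∃ S N : Finset ι, N.card < S.card ∧ ∀ i ∈ S, ∀ j, r i j → j ∈ N := by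
  classical
  let t : ι → Finset ι := fun i => univ.filter (r i)
  -- Otherwise Hall's condition holds, and a transversal is a permutation avoiding the zeros.
  by_contra hall
  have hHall : ∀ S : Finset ι, S.card ≤ (S.biUnion t).card := fun S => not_lt.mp fun hlt =>
    hall ⟨S, _, hlt, fun i hi j hij => mem_biUnion.mpr ⟨i, hi, by simpa [t] using hij⟩⟩
  obtain ⟨f, hf_inj, hf⟩ := (all_card_le_biUnion_card_iff_existsInjective' t).mp hHall
  obtain ⟨i, hi⟩ := hperm (Equiv.ofBijective f (Finite.injective_iff_bijective.mp hf_inj))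
  exact hi (by simpa [t] using hf i)

theorem isAdmissible_compl {n : ℕ} {A : Fin (n + 1) → Fin (n + 1) → Prop}
    {S N : Finset (Fin (n + 1))} (hcard : N.card < S.card)
    (hN : ∀ i ∈ S, ∀ j, A i j → j ∈ N) : IsAdmissible A Nᶜ := by
  have hS : S.card ≤ n + 1 := by simpa using card_le_univ S
  have hNc : Nᶜ.card = n + 1 - N.card := by simp [card_compl]
  obtain ⟨I, hIS, hI⟩ := exists_subset_card_eq (s := S) (n := n + 2 - Nᶜ.card) (by omega)
  refine ⟨card_pos.mp (by omega), I, card_pos.mp (by omega), by omega, ?_⟩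
  intro i hi j hj hA
  exact mem_compl.mp hj (hN i (hIS hi) j hA)

theorem exists_isAdmissible {n : ℕ} (A : Fin (n + 1) → Fin (n + 1) → Prop)
    (hperm : ∀ σ : Equiv.Perm (Fin (n + 1)), ∃ i, ¬ A i (σ i)) :
    ∃ J, IsAdmissible A J :=
  let ⟨_, _, hcard, hN⟩ := exists_card_lt_of_forall_perm_exists_not A hperm
  ⟨_, isAdmissible_compl hcard hN⟩

section

variable {n : ℕ} {A : Fin (n + 1) → Fin (n + 1) → Prop} {J : Finset (Fin (n + 1))}
  {k : Fin (n + 1)}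

theorem IsAdmissible.of_forall_not_imp {A' : Fin (n + 1) → Fin (n + 1) → Prop}
    (hzero : ∀ i j, ¬ A' i j → ¬ A i j) (hJ : IsAdmissible A' J) : IsAdmissible A J :=
  let ⟨hJne, I, hIne, hcard, hz⟩ := hJ
  ⟨hJne, I, hIne, hcard, fun i hi j hj => hzero i j (hz i hi j hj)⟩

theorem IsAdmissible.forall_not_of_singleton (hk : IsAdmissible A {k}) : ∀ i, ¬ A i k := by
  obtain ⟨-, I, -, hcard, hz⟩ := hk
  have hI : I = univ := eq_univ_of_card I (by simpa using hcard)
  exact fun i => hz i (hI ▸ mem_univ i) k (mem_singleton_self k)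

theorem IsAdmissible.insert (hJ : IsAdmissible A J) (hk : ∀ i, ¬ A i k) (hkJ : k ∉ J) :
    IsAdmissible A (insert k J) := by
  obtain ⟨-, I, ⟨i₀, hi₀⟩, hcard, hz⟩ := hJ
  have hJlt : J.card < n + 1 := by
    simpa using card_lt_card (ssubset_of_subset_of_ne (subset_univ J) (by grind))
  have hIcard : (I.erase i₀).card = I.card - 1 := card_erase_of_mem hi₀
  refine ⟨insert_nonempty k J, I.erase i₀, card_pos.mp (by omega),
    by rw [card_insert_of_notMem hkJ]; omega, ?_⟩
  intro i hi j hj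
  rcases mem_insert.mp hj with rfl | hj
  · exact hk i
  · exact hz i (mem_of_mem_erase hi) j hj

theorem IsMaximalColoring.mem_of_forall_not (hJ : IsMaximalColoring A J)
    (hk : ∀ i, ¬ A i k) : k ∈ J := by
  by_contra hkJ
  have := hJ.2 _ (hJ.1.insert hk hkJ) (subset_insert k J)
  exact hkJ (this ▸ mem_insert_self k J)

end

theorem single_color_propagates_general {n : ℕ}
    (A A' A'' : Fin (n + 1) → Fin (n + 1) → Prop)
    (hpermA' : ∀ σ : Equiv.Perm (Fin (n + 1)), ∃ i : Fin (n + 1), ¬ A' i (σ i))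
    (k : Fin (n + 1)) :
    ((∀ i j : Fin (n + 1), ¬ A' i j → ¬ A i j) →
      (IsAdmissible A {k} ∧ ∀ J : Finset (Fin (n + 1)), IsAdmissible A J → J = {k}) →
      (IsAdmissible A' {k} ∧ ∀ J : Finset (Fin (n + 1)), IsAdmissible A' J → J = {k})) ∧
    (IsAdmissible A'' {k} →
      ∀ J : Finset (Fin (n + 1)), IsMaximalColoring A'' J → k ∈ J) := by
  refine ⟨fun hzero ⟨_, huniq⟩ => ?_,
    fun hk J hJ => hJ.mem_of_forall_not hk.forall_not_of_singleton⟩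
  have huniq' : ∀ J, IsAdmissible A' J → J = {k} :=
    fun J hJ => huniq J (hJ.of_forall_not_imp hzero)
  obtain ⟨J₀, hJ₀⟩ := exists_isAdmissible A' hpermA'
  exact ⟨huniq' J₀ hJ₀ ▸ hJ₀, huniq'⟩

/-- Let `A`, `A'`, `A''` be `(n+1) × (n+1)` (0,1)-matrices with zero permanent.
(1) If every zero entry of `A'` is also a zero entry of `A` and `{k}` is the unique
admissible coloring of `A`, then `{k}` is the unique admissible coloring of `A'`.
(2) If `{k}` is an admissible coloring of `A''`, then `k` belongs to every maximal
admissible coloring of `A''` (in particular, to the maximal canonical coloring). -/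
theorem single_color_propagates {n : ℕ}
    (A A' A'' : Fin (n + 1) → Fin (n + 1) → Prop)
    (hpermA : ∀ σ : Equiv.Perm (Fin (n + 1)), ∃ i : Fin (n + 1), ¬ A i (σ i))
    (hpermA' : ∀ σ : Equiv.Perm (Fin (n + 1)), ∃ i : Fin (n + 1), ¬ A' i (σ i))
    (hpermA'' : ∀ σ : Equiv.Perm (Fin (n + 1)), ∃ i : Fin (n + 1), ¬ A'' i (σ i))
    (k : Fin (n + 1)) :
    ((∀ i j : Fin (n + 1), ¬ A' i j → ¬ A i j) →
      (IsAdmissible A {k} ∧ ∀ J : Finset (Fin (n + 1)), IsAdmissible A J → J = {k}) →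
      (IsAdmissible A' {k} ∧ ∀ J : Finset (Fin (n + 1)), IsAdmissible A' J → J = {k})) ∧
    (IsAdmissible A'' {k} →
      ∀ J : Finset (Fin (n + 1)), IsMaximalColoring A'' J → k ∈ J) :=
  single_color_propagates_general A A' A'' hpermA' k
end

section
/- Let P and P′ be polytopes in ℝⁿ (convex hulls of nonempty finite sets of points), with P having nonempty interior. Let v be a nonzero linear functional on ℝⁿ such that the face Q = F(P, v) = {x ∈ P : v(x) ≤ v(y) for all y ∈ P} has affine span of dimension n − 1 (so Q is a facet of P), and let Γ′ = F(P′, v) = {x ∈ P′ : v(x) ≤ v(y) for all y ∈ P′}. If u lies in the relative interior (intrinsic interior) of Q and u′ ∈ P′ with u′ ∉ Γ′, then u + u′ lies in the interior of the Minkowski sum P + P′. -/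
/-!
Because `Q = F(P, v)` is a facet, its affine span is the whole hyperplane `v = v u`, so a
relative neighbourhood of `u` in that hyperplane lies in `Q`; translating by `u'`, the convex
set `P + P'` contains a relative neighbourhood of `u + u'` in the hyperplane through it. It also
contains a point strictly above that hyperplane (`z + u'` with `z ∈ P`, as `P` has interior)
and one strictly below (`u + q'` with `q' ∈ P'`, `v q' < v u'`, as `u' ∉ Γ'`). A convex set
containing such a configuration contains a neighbourhood of its centre: every nearby point is
a convex combination of the apex above or below it and a point of the hyperplane near `u + u'`.
-/

open Pointwise

/-- `faceOf K v` is the face `F(K, v) = {x ∈ K | ∀ y ∈ K, v x ≤ v y}` of `K` on which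
the linear functional `v` attains its minimum over `K`. -/
def faceOf {n : ℕ} (K : Set (Fin n → ℝ)) (v : (Fin n → ℝ) →ₗ[ℝ] ℝ) :
    Set (Fin n → ℝ) :=
  {x ∈ K | ∀ y ∈ K, v x ≤ v y}

open Filter Topology Set Module

theorem eventually_mem_of_mem_intrinsicInterior {E : Type*} [AddCommGroup E] [Module ℝ E]
    [TopologicalSpace E] {s : Set E} {u : E} (hu : u ∈ intrinsicInterior ℝ s) :
    ∀ᶠ y in 𝓝 u, y ∈ affineSpan ℝ s → y ∈ s := by
  obtain ⟨y, hy, rfl⟩ := mem_intrinsicInterior.1 hu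
  exact mem_nhdsWithin_iff_eventually.1
    (preimage_coe_mem_nhds_subtype.1 (mem_interior_iff_mem_nhds.1 hy))

theorem mem_affineSpan_of_apply_eq {k E : Type*} [Field k] [AddCommGroup E] [Module k E]
    [FiniteDimensional k E] {s : Set E} {f : E →ₗ[k] k} {u y : E} (hu : u ∈ s)
    (hs : ∀ x ∈ s, f x = f u)
    (hdim : finrank k (affineSpan k s).direction = finrank k (LinearMap.ker f))
    (hy : f y = f u) : y ∈ affineSpan k s := by
  have hle : (affineSpan k s).direction ≤ LinearMap.ker f := by
    rw [direction_affineSpan, vectorSpan_def, Submodule.span_le]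
    rintro _ ⟨x, hx, z, hz, rfl⟩
    simp [hs x hx, hs z hz]
  rw [← AffineSubspace.vsub_right_mem_direction_iff_mem (subset_affineSpan k s hu),
    Submodule.eq_of_le_of_finrank_eq hle hdim]
  simp [hy]

theorem exists_mem_apply_gt_of_mem_interior {E : Type*} [AddCommGroup E] [Module ℝ E]
    [TopologicalSpace E] [IsTopologicalAddGroup E] [ContinuousSMul ℝ E] [T2Space E]
    [FiniteDimensional ℝ E] {s : Set E} {f : E →ₗ[ℝ] ℝ} (hf : f ≠ 0) {x : E}
    (hx : x ∈ interior s) : ∃ z ∈ s, f x < f z := by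
  have hopen := f.isOpenMap_of_finiteDimensional (LinearMap.surjective hf)
  have himage : f '' interior s ∈ 𝓝 (f x) := (hopen _ isOpen_interior).mem_nhds ⟨x, hx, rfl⟩
  obtain ⟨_, hlt, z, hz, rfl⟩ :=
    Filter.nonempty_of_mem (inter_mem_nhdsWithin (Ioi (f x)) himage)
  exact ⟨z, interior_subset hz, hlt⟩

section Bipyramid

variable {E : Type*} [AddCommGroup E] [Module ℝ E] [TopologicalSpace E]
  [IsTopologicalAddGroup E] [ContinuousSMul ℝ E] {K : Set E} {f : E →ₗ[ℝ] ℝ} {u : E}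

theorem Convex.eventually_mem_of_apply_le (hK : Convex ℝ K) (hf : Continuous f)
    (hrel : ∀ᶠ y in 𝓝 u, f y = f u → y ∈ K) {a : E} (ha : a ∈ K) (hua : f u < f a) :
    ∀ᶠ w in 𝓝 u, f u ≤ f w → w ∈ K := by
  set t : E → ℝ := fun w ↦ (f w - f u) / (f a - f u)
  -- `y w` is the point where the ray from `a` through `w` meets the hyperplane `f = f u`.
  set y : E → E := fun w ↦ (1 - t w)⁻¹ • (w - t w • a)
  have ht : Continuous t := by fun_prop
  have ht₀ : t u = 0 := by simp [t]
  have hy : Tendsto y (𝓝 u) (𝓝 u) := by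
    have : ContinuousAt y u :=
      ((continuous_const.sub ht).continuousAt.inv₀ (by simp [ht₀])).smul
        (continuous_id.sub (ht.smul continuous_const)).continuousAt
    simpa [y, ht₀] using this.tendsto
  filter_upwards [hy.eventually hrel, ht.continuousAt.eventually (gt_mem_nhds (ht₀ ▸ one_pos))]
    with w hyK ht₁ hle
  have hne : 1 - t w ≠ 0 := by linarith
  have hta : t w * (f a - f u) = f w - f u := div_mul_cancel₀ _ (by linarith)
  have hfy : f (y w) = f u := by
    simp only [y, map_smul, map_sub, smul_eq_mul]
    field_simp
    linarith
  have hw : (1 - t w) • y w + t w • a = w := by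
    simp only [y, smul_smul, mul_inv_cancel₀ hne, one_smul, sub_add_cancel]
  rw [← hw]
  exact hK (hyK hfy) ha (by linarith) (div_nonneg (by linarith) (by linarith)) (by ring)

theorem Convex.mem_interior_of_apply_lt_of_lt_apply (hK : Convex ℝ K) (hf : Continuous f)
    (hrel : ∀ᶠ y in 𝓝 u, f y = f u → y ∈ K) {a b : E} (ha : a ∈ K) (hua : f u < f a)
    (hb : b ∈ K) (hbu : f b < f u) : u ∈ interior K := by
  have habove := hK.eventually_mem_of_apply_le hf hrel ha hua
  have hbelow := hK.eventually_mem_of_apply_le (f := -f) hf.neg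
    (by simpa only [LinearMap.neg_apply, neg_inj] using hrel) hb (by simpa using hbu)
  rw [mem_interior_iff_mem_nhds]
  filter_upwards [habove, hbelow] with w hw₁ hw₂
  exact (le_total (f u) (f w)).elim hw₁ fun h ↦ hw₂ (by simpa using h)

end Bipyramid

theorem apply_eq_of_mem_faceOf {n : ℕ} {K : Set (Fin n → ℝ)} {v : (Fin n → ℝ) →ₗ[ℝ] ℝ}
    {x y : Fin n → ℝ} (hx : x ∈ faceOf K v) (hy : y ∈ faceOf K v) : v x = v y :=
  le_antisymm (hx.2 y hy.1) (hy.2 x hx.1)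

theorem facet_relint_add_mem_interior_general {n : ℕ} (S S' : Finset (Fin n → ℝ))
    (P P' : Set (Fin n → ℝ))
    (hP : P = convexHull ℝ (S : Set (Fin n → ℝ)))
    (hP' : P' = convexHull ℝ (S' : Set (Fin n → ℝ)))
    (hint : (interior P).Nonempty)
    (v : (Fin n → ℝ) →ₗ[ℝ] ℝ) (hv : v ≠ 0)
    (hQdim : Module.finrank ℝ (affineSpan ℝ (faceOf P v)).direction = n - 1)
    (u u' : Fin n → ℝ)
    (hu : u ∈ intrinsicInterior ℝ (faceOf P v))
    (hu' : u' ∈ P') (hu'' : u' ∉ faceOf P' v) :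
    u + u' ∈ interior (P + P') := by
  have huQ : u ∈ faceOf P v := intrinsicInterior_subset hu
  have hkerdim : finrank ℝ (LinearMap.ker v) = n - 1 := by
    have := Module.Dual.finrank_ker_add_one_of_ne_zero hv
    rw [Module.finrank_fin_fun] at this
    omega
  have hQ : ∀ᶠ y in 𝓝 u, v y = v u → y ∈ faceOf P v :=
    (eventually_mem_of_mem_intrinsicInterior hu).mono fun y hy hvy ↦ hy <|
      mem_affineSpan_of_apply_eq huQ (fun x hx ↦ apply_eq_of_mem_faceOf hx huQ)
        (hQdim.trans hkerdim.symm) hvy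
  obtain ⟨x₀, hx₀⟩ := hint
  obtain ⟨z, hzP, hz⟩ := exists_mem_apply_gt_of_mem_interior hv hx₀
  obtain ⟨q', hq', hq'u'⟩ : ∃ q' ∈ P', v q' < v u' := by simpa [faceOf, hu'] using hu''
  have hsub : Tendsto (· - u') (𝓝 (u + u')) (𝓝 u) := by
    simpa using (continuous_sub_right u').tendsto (u + u')
  have hconv : Convex ℝ (P + P') :=
    (hP ▸ convex_convexHull ℝ _).add (hP' ▸ convex_convexHull ℝ _)
  refine hconv.mem_interior_of_apply_lt_of_lt_apply v.continuous_of_finiteDimensional ?_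
    (add_mem_add hzP hu') ?_ (add_mem_add huQ.1 hq') ?_
  · filter_upwards [hsub.eventually hQ] with w hw hvw
    simpa using add_mem_add (hw (by simp [hvw])).1 hu'
  · simpa using huQ.2 x₀ (interior_subset hx₀) |>.trans_lt hz
  · simpa using hq'u'

/-- Let `P` and `P'` be polytopes in `ℝⁿ` (convex hulls of nonempty finite sets), with
`P` having nonempty interior. Let `v` be a nonzero linear functional such that
`Q = F(P, v)` is a facet of `P` (its affine span has dimension `n - 1`), and let
`Γ' = F(P', v)`. If `u` lies in the relative interior of `Q` and `u' ∈ P'` with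
`u' ∉ Γ'`, then `u + u'` lies in the interior of the Minkowski sum `P + P'`. -/
theorem facet_relint_add_mem_interior {n : ℕ} (S S' : Finset (Fin n → ℝ))
    (hS : S.Nonempty) (hS' : S'.Nonempty)
    (P P' : Set (Fin n → ℝ))
    (hP : P = convexHull ℝ (S : Set (Fin n → ℝ)))
    (hP' : P' = convexHull ℝ (S' : Set (Fin n → ℝ)))
    (hint : (interior P).Nonempty)
    (v : (Fin n → ℝ) →ₗ[ℝ] ℝ) (hv : v ≠ 0)
    (hQdim : Module.finrank ℝ (affineSpan ℝ (faceOf P v)).direction = n - 1)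
    (u u' : Fin n → ℝ)
    (hu : u ∈ intrinsicInterior ℝ (faceOf P v))
    (hu' : u' ∈ P') (hu'' : u' ∉ faceOf P' v) :
    u + u' ∈ interior (P + P') :=
  facet_relint_add_mem_interior_general S S' P P' hP hP' hint v hv hQdim u u' hu hu' hu''
end

section
/- Let K₀, …, K_m be nonempty compact convex subsets of ℝⁿ and let P = K₀ + ⋯ + K_m be their Minkowski sum. Let v and w be linear functionals on ℝⁿ. If F(P, v) ⊆ F(P, w), then F(K_i, v) ⊆ F(K_i, w) for every 0 ≤ i ≤ m. -/
open Pointwise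

/-!
A point `∑ j, x j` of `P = ∑ j, K j` minimizes `v` over `P` exactly when every summand `x j`
minimizes `v` over `K j`: replacing one summand by another point of its set changes `v` of the
sum by the change of `v` on that summand. Given `x ∈ F(K_i, v)`, complete it by minimizers of
`v` on the other summands (they exist by compactness); the sum lies in `F(P, v) ⊆ F(P, w)`, so
each summand, in particular `x`, lies in the corresponding face for `w`.
-/

theorem faceOf_nonempty {n : ℕ} {K : Set (Fin n → ℝ)} (hne : K.Nonempty) (hcpt : IsCompact K)
    (v : (Fin n → ℝ) →ₗ[ℝ] ℝ) : (faceOf K v).Nonempty := by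
  obtain ⟨z, hz, hmin⟩ := hcpt.exists_isMinOn hne v.continuous_of_finiteDimensional.continuousOn
  exact ⟨z, hz, fun y hy => hmin hy⟩

section SumOfSets

variable {n : ℕ} {ι : Type*} [Fintype ι]
  {K : ι → Set (Fin n → ℝ)} {x : ι → Fin n → ℝ}

theorem sum_mem_faceOf_sum (v : (Fin n → ℝ) →ₗ[ℝ] ℝ) (hx : ∀ j, x j ∈ faceOf (K j) v) :
    ∑ j, x j ∈ faceOf (∑ j, K j) v := by
  refine ⟨Set.finsetSum_mem_finsetSum _ _ _ fun j _ => (hx j).1, fun y hy => ?_⟩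
  obtain ⟨y, hyK, rfl⟩ := (Set.mem_fintype_sum K _).1 hy
  simp only [map_sum]
  exact Finset.sum_le_sum fun j _ => (hx j).2 _ (hyK j)

theorem mem_faceOf_of_sum_mem_faceOf_sum [DecidableEq ι] (v : (Fin n → ℝ) →ₗ[ℝ] ℝ) (hxK : ∀ j, x j ∈ K j)
    (hx : ∑ j, x j ∈ faceOf (∑ j, K j) v) (i : ι) : x i ∈ faceOf (K i) v := by
  refine ⟨hxK i, fun y hy => ?_⟩
  have hupdate : ∑ j, Function.update x i y j ∈ ∑ j, K j :=
    Set.finsetSum_mem_finsetSum _ _ _ fun j _ =>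
      (Function.forall_update_iff x fun j z => z ∈ K j).2 ⟨hy, fun j _ => hxK j⟩ j
  have hle := hx.2 _ hupdate
  rw [Finset.sum_eq_add_sum_sdiff_singleton_of_mem (Finset.mem_univ i),
    Finset.sum_update_of_mem (Finset.mem_univ i), map_add, map_add] at hle
  linarith

end SumOfSets

theorem faceOf_summand_subset_general {n m : ℕ} (K : Fin (m + 1) → Set (Fin n → ℝ))
    (hne : ∀ i, (K i).Nonempty) (hcpt : ∀ i, IsCompact (K i))
    (v w : (Fin n → ℝ) →ₗ[ℝ] ℝ)
    (h : faceOf (∑ i, K i) v ⊆ faceOf (∑ i, K i) w) :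
    ∀ i : Fin (m + 1), faceOf (K i) v ⊆ faceOf (K i) w := by
  intro i x hx
  choose z hz using fun j => faceOf_nonempty (hne j) (hcpt j) v
  have hface : ∀ j, Function.update z i x j ∈ faceOf (K j) v :=
    (Function.forall_update_iff z fun j y => y ∈ faceOf (K j) v).2 ⟨hx, fun j _ => hz j⟩
  have hsum := h (sum_mem_faceOf_sum v hface)
  simpa using mem_faceOf_of_sum_mem_faceOf_sum w (fun j => (hface j).1) hsum i

/-- Let `K₀, …, K_m` be nonempty compact convex subsets of `ℝⁿ` and let
`P = K₀ + ⋯ + K_m` be their Minkowski sum. If `F(P, v) ⊆ F(P, w)` for linear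
functionals `v, w`, then `F(K_i, v) ⊆ F(K_i, w)` for every `i`. -/
theorem faceOf_summand_subset {n m : ℕ} (K : Fin (m + 1) → Set (Fin n → ℝ))
    (hne : ∀ i, (K i).Nonempty) (hcpt : ∀ i, IsCompact (K i))
    (hconv : ∀ i, Convex ℝ (K i))
    (v w : (Fin n → ℝ) →ₗ[ℝ] ℝ)
    (h : faceOf (∑ i, K i) v ⊆ faceOf (∑ i, K i) w) :
    ∀ i : Fin (m + 1), faceOf (K i) v ⊆ faceOf (K i) w :=
  faceOf_summand_subset_general K hne hcpt v w h
end

section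
/- Let P₀, …, P_m be nonempty compact convex subsets of ℝⁿ such that the Minkowski sum P = P₀ + ⋯ + P_m has nonempty interior. For each i, let u_i, w_i ∈ P_i be points such that for every linear functional v on ℝⁿ, if u_i ∈ F(P_i, v) then w_i ∈ F(P_i, v) (i.e., w_i lies on every exposed face of P_i that contains u_i). If w₀ + ⋯ + w_m lies in the interior of P, then u₀ + ⋯ + u_m lies in the interior of P. -/
/-!
Suppose `∑ uᵢ` is not interior to the convex body `P = ∑ Pᵢ`. A supporting functional `f` at
`∑ uᵢ` is maximised over `P` there, so each `uᵢ` maximises `f` over `Pᵢ`, i.e. lies on the face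
`F(Pᵢ, -f)`. That face then contains `wᵢ`, whence `f (∑ wᵢ) ≥ f (∑ uᵢ)`; but `f` is strictly
smaller than `f (∑ uᵢ)` on the interior of `P`, which contains `∑ wᵢ`.
-/

open Pointwise

theorem Convex.exists_isMaxOn_of_notMem_interior {E : Type*} [TopologicalSpace E]
    [AddCommGroup E] [Module ℝ E] [IsTopologicalAddGroup E] [ContinuousSMul ℝ E]
    {s : Set E} {x : E} (hs : Convex ℝ s)
    (hs_int : (interior s).Nonempty) (hx : x ∉ interior s) :
    ∃ f : StrongDual ℝ E, IsMaxOn f s x ∧ ∀ y ∈ interior s, f y < f x := by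
  obtain ⟨f, hf⟩ := geometric_hahn_banach_open_point hs.interior isOpen_interior hx
  refine ⟨f, fun y hy => ?_, hf⟩
  have hy : y ∈ closure (interior s) := by
    rw [hs.closure_interior_eq_closure_of_nonempty_interior hs_int]
    exact subset_closure hy
  exact closure_minimal (fun z hz => (hf z hz).le) (isClosed_Iic.preimage f.continuous) hy

section MinkowskiSum

variable {M β F : Type*} [AddCommMonoid M] [AddCommMonoid β] [PartialOrder β]
  [IsOrderedCancelAddMonoid β] [FunLike F M β] [AddHomClass F M β]

theorem IsMaxOn.of_add_left {f : F} {A B : Set M} {a b : M} (hb : b ∈ B)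
    (h : IsMaxOn f (A + B) (a + b)) : IsMaxOn f A a := fun x hx => by
  have hxb : f (x + b) ≤ f (a + b) := h (Set.add_mem_add hx hb)
  rw [map_add, map_add] at hxb
  exact le_of_add_le_add_right hxb

theorem IsMaxOn.of_finsetSum {ι : Type*} [DecidableEq ι] {f : F} {s : Finset ι}
    {P : ι → Set M} {u : ι → M} (hu : ∀ i ∈ s, u i ∈ P i)
    (h : IsMaxOn f (∑ i ∈ s, P i) (∑ i ∈ s, u i)) {i : ι} (hi : i ∈ s) :
    IsMaxOn f (P i) (u i) := by
  rw [← s.add_sum_erase P hi, ← s.add_sum_erase u hi] at h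
  exact h.of_add_left
    (Set.finsetSum_mem_finsetSum _ _ _ fun j hj => hu j (Finset.mem_of_mem_erase hj))

end MinkowskiSum

theorem mem_faceOf_neg_of_isMaxOn {n : ℕ} {K : Set (Fin n → ℝ)}
    {f : (Fin n → ℝ) →ₗ[ℝ] ℝ} {x : Fin n → ℝ} (hx : x ∈ K) (h : IsMaxOn f K x) :
    x ∈ faceOf K (-f) :=
  ⟨hx, fun _ hy => neg_le_neg (h hy)⟩

theorem sum_mem_interior_of_face_dominating_general {n m : ℕ}
    (P : Fin (m + 1) → Set (Fin n → ℝ))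
    (hconv : ∀ i, Convex ℝ (P i))
    (u w : Fin (m + 1) → (Fin n → ℝ))
    (hu : ∀ i, u i ∈ P i)
    (hface : ∀ i, ∀ v : (Fin n → ℝ) →ₗ[ℝ] ℝ,
      u i ∈ faceOf (P i) v → w i ∈ faceOf (P i) v)
    (hwint : ∑ i, w i ∈ interior (∑ i, P i)) :
    ∑ i, u i ∈ interior (∑ i, P i) := by
  by_contra hu_int
  obtain ⟨f, hmax, hlt⟩ := (convex_sum P fun i _ => hconv i).exists_isMaxOn_of_notMem_interior
    ⟨_, hwint⟩ hu_int
  have hle : ∀ i, f (u i) ≤ f (w i) := fun i => by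
    have hw_face := hface i _ <| mem_faceOf_neg_of_isMaxOn (hu i)
      (hmax.of_finsetSum (fun j _ => hu j) (Finset.mem_univ i))
    simpa using hw_face.2 (u i) (hu i)
  have hw_lt := hlt _ hwint
  rw [map_sum, map_sum] at hw_lt
  exact hw_lt.not_ge (Finset.sum_le_sum fun i _ => hle i)

/-- Let `P₀, …, P_m` be nonempty compact convex subsets of `ℝⁿ` with Minkowski sum `P`.
For each `i`, let `uᵢ, wᵢ ∈ Pᵢ` be points such that `wᵢ` lies on every exposed face
`F(Pᵢ, v)` of `Pᵢ` containing `uᵢ`. If `w₀ + ⋯ + w_m` lies in the interior of `P`,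
then `u₀ + ⋯ + u_m` lies in the interior of `P`. -/
theorem sum_mem_interior_of_face_dominating {n m : ℕ}
    (P : Fin (m + 1) → Set (Fin n → ℝ))
    (hne : ∀ i, (P i).Nonempty) (hcpt : ∀ i, IsCompact (P i))
    (hconv : ∀ i, Convex ℝ (P i))
    (u w : Fin (m + 1) → (Fin n → ℝ))
    (hu : ∀ i, u i ∈ P i) (hw : ∀ i, w i ∈ P i)
    (hface : ∀ i, ∀ v : (Fin n → ℝ) →ₗ[ℝ] ℝ,
      u i ∈ faceOf (P i) v → w i ∈ faceOf (P i) v)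
    (hwint : ∑ i, w i ∈ interior (∑ i, P i)) :
    ∑ i, u i ∈ interior (∑ i, P i) :=
  sum_mem_interior_of_face_dominating_general P hconv u w hu hface hwint
end

section
/- Let n ≥ 1 and let P₀, …, P_n be polytopes in ℝⁿ (convex hulls of nonempty finite sets of points). Let v₁, …, v_n be linear functionals on ℝⁿ and define, for each 0 ≤ i ≤ n, the descending chain of faces P_i^n = P_i and P_i^{j−1} = F(P_i^j, v_j) for j = n, n−1, …, 1. Assume: (a) for every nonempty subset I ⊆ {0,…,n} and every 0 ≤ j ≤ n−1, the affine span of the Minkowski sum Σ_{i ∈ I} P_i^j has dimension exactly j (so the polytopes share a complete flag of faces); (b) the family is essential: for every nonempty proper subset I ⊊ {0,…,n}, the affine span of Σ_{i ∈ I} P_i has dimension at least |I|. Then for every permutation ε of {0,…,n} and every choice of points m₀, …, m_n with m_j ∈ P_{ε(j)}^j for all j and m_j ∉ P_{ε(j)}^{j−1} for all j ≥ 1, the sum m₀ + m₁ + ⋯ + m_n lies in the interior of the Minkowski sum P₀ + ⋯ + P_n. -/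
open Pointwise

/-!
If `x = ∑ m_j` were not interior to the convex set `∑ P_i`, a nonzero functional `w` would
attain its minimum over `∑ P_i` at `x`, hence over each `P_{ε(j)}` at `m_j`. Let `s` be the
first level at which `w` is not constant on every face `P_i^s`; the faces `P_i^0` are points
and essentiality forbids `w` to be constant on `n` of the `P_i`, so `1 ≤ s ≤ n`. The faces
`P_i^{s-1}` span a subspace of codimension at most one in the span of the `P_i^s`, and both
`v_s` and `w` vanish on it, so `v_s = c • w` on the directions of the `P_i^s`. If `c > 0`, then
`m_s` minimizes `v_s` on `P_{ε(s)}^s`, i.e. lies in `P_{ε(s)}^{s-1}`, which is excluded.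
If `c ≤ 0`, every `m_j` with `j < s` minimizes and maximizes `v_s` on `P_{ε(j)}^s`, so
`P_{ε(j)}^{s-1} = P_{ε(j)}^s` for these `s` indices; but the sum of these faces has dimension
`s - 1` at level `s - 1` and at least `s` at level `s` (by the flag condition, or by
essentiality when `s = n`).
-/

open Module Set

section MinkowskiSum

variable {E : Type*} [AddCommGroup E] [Module ℝ E]

lemma vectorSpan_add_le (A B : Set E) :
    vectorSpan ℝ (A + B) ≤ vectorSpan ℝ A ⊔ vectorSpan ℝ B := by
  rw [vectorSpan_def, Submodule.span_le]
  rintro _ ⟨_, ⟨a, ha, b, hb, rfl⟩, _, ⟨a', ha', b', hb', rfl⟩, rfl⟩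
  have hsplit : a + b -ᵥ (a' + b') = (a -ᵥ a') + (b -ᵥ b') := by
    simp only [vsub_eq_sub]; abel
  change a + b -ᵥ (a' + b') ∈ _
  rw [hsplit]
  exact Submodule.add_mem_sup (vsub_mem_vectorSpan ℝ ha ha') (vsub_mem_vectorSpan ℝ hb hb')

lemma vectorSpan_le_vectorSpan_add {A B : Set E} (hB : B.Nonempty) :
    vectorSpan ℝ A ≤ vectorSpan ℝ (A + B) := by
  obtain ⟨b, hb⟩ := hB
  rw [vectorSpan_def, Submodule.span_le]
  rintro _ ⟨a, ha, a', ha', rfl⟩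
  simpa using vsub_mem_vectorSpan ℝ (add_mem_add ha hb) (add_mem_add ha' hb)

lemma vectorSpan_finsetSum_le {ι : Type*} (I : Finset ι) (A : ι → Set E)
    {U : Submodule ℝ E} (h : ∀ i ∈ I, vectorSpan ℝ (A i) ≤ U) :
    vectorSpan ℝ (∑ i ∈ I, A i) ≤ U := by
  induction I using Finset.cons_induction with
  | empty => simp [← singleton_zero]
  | cons i I hi ih =>
    rw [Finset.sum_cons]
    refine (vectorSpan_add_le _ _).trans (sup_le (h i (Finset.mem_cons_self i I)) ?_)
    exact ih fun j hj => h j (Finset.mem_cons_of_mem hj)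

lemma vectorSpan_le_vectorSpan_finsetSum {ι : Type*} [DecidableEq ι] {I : Finset ι}
    {A : ι → Set E} (hA : ∀ i ∈ I, (A i).Nonempty) {i : ι} (hi : i ∈ I) :
    vectorSpan ℝ (A i) ≤ vectorSpan ℝ (∑ j ∈ I, A j) := by
  rw [← Finset.add_sum_erase I A hi]
  exact vectorSpan_le_vectorSpan_add <| Finset.sum_induction A Set.Nonempty
    (fun _ _ => Nonempty.add) zero_nonempty fun j hj => hA j (Finset.mem_of_mem_erase hj)

lemma IsMinOn.of_add {A B : Set E} {w : E →ₗ[ℝ] ℝ} {a b : E} (h : IsMinOn w (A + B) (a + b))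
    (hb : b ∈ B) : IsMinOn w A a := fun y hy => by
  simpa using h (add_mem_add hy hb)

lemma IsMinOn.of_finsetSum {ι : Type*} [DecidableEq ι] {I : Finset ι} {A : ι → Set E}
    {x : ι → E} {w : E →ₗ[ℝ] ℝ} (h : IsMinOn w (∑ j ∈ I, A j) (∑ j ∈ I, x j))
    (hx : ∀ j ∈ I, x j ∈ A j) {i : ι} (hi : i ∈ I) : IsMinOn w (A i) (x i) := by
  rw [← Finset.add_sum_erase I A hi, ← Finset.add_sum_erase I x hi] at h
  exact h.of_add <| finsetSum_mem_finsetSum _ _ _ fun j hj => hx j (Finset.mem_of_mem_erase hj)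

end MinkowskiSum

lemma Convex.exists_ne_zero_isMinOn_of_notMem_interior {E : Type*} [NormedAddCommGroup E]
    [NormedSpace ℝ E] [FiniteDimensional ℝ E] {C : Set E} (hC : Convex ℝ C) {x : E}
    (hxC : x ∈ C) (hx : x ∉ interior C) : ∃ w : E →ₗ[ℝ] ℝ, w ≠ 0 ∧ IsMinOn w C x := by
  by_cases hint : (interior C).Nonempty
  · obtain ⟨f, hf, hmax⟩ := geometric_hahn_banach_of_nonempty_interior_point hC hx hint
    refine ⟨-(f : E →ₗ[ℝ] ℝ), fun h => hf ?_, fun y hy => ?_⟩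
    · ext z; simpa using congr($h z)
    · simpa using hmax y hy
  · have hspan : vectorSpan ℝ C < ⊤ := by
      rw [lt_top_iff_ne_top, ne_eq,
        ← AffineSubspace.affineSpan_eq_top_iff_vectorSpan_eq_top_of_nonempty ℝ E E ⟨x, hxC⟩,
        ← hC.interior_nonempty_iff_affineSpan_eq_top]
      exact hint
    obtain ⟨w, hw, hker⟩ := (vectorSpan ℝ C).exists_le_ker_of_lt_top hspan
    refine ⟨w, hw, fun y hy => ?_⟩
    have := hker (vsub_mem_vectorSpan ℝ hy hxC)
    rw [LinearMap.mem_ker, vsub_eq_sub, map_sub, sub_eq_zero] at this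
    exact this.ge

section Dual

variable {E : Type*} [AddCommGroup E] [Module ℝ E]

lemma Submodule.inf_ker_le_of_finrank_le_succ [FiniteDimensional ℝ E] {U W : Submodule ℝ E}
    {g : E →ₗ[ℝ] ℝ}
    (hWU : W ≤ U) (hWg : W ≤ LinearMap.ker g) (hUg : ¬U ≤ LinearMap.ker g)
    (hdim : finrank ℝ U ≤ finrank ℝ W + 1) : U ⊓ LinearMap.ker g ≤ W := by
  have hlt : finrank ℝ ↥(U ⊓ LinearMap.ker g) < finrank ℝ U :=
    Submodule.finrank_lt_finrank_of_lt (inf_le_left.lt_of_ne fun h => hUg (h ▸ inf_le_right))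
  exact (Submodule.eq_of_le_of_finrank_le (le_inf hWU hWg) (by omega)).ge

lemma exists_eq_mul_of_inf_ker_le {U : Submodule ℝ E} {f g : E →ₗ[ℝ] ℝ}
    (h : U ⊓ LinearMap.ker g ≤ LinearMap.ker f) : ∃ c : ℝ, ∀ u ∈ U, f u = c * g u := by
  by_cases hUg : ∃ u₀ ∈ U, g u₀ ≠ 0
  · obtain ⟨u₀, hu₀, hgu₀⟩ := hUg
    refine ⟨f u₀ / g u₀, fun u hu => ?_⟩
    have hmem : u - (g u / g u₀) • u₀ ∈ U ⊓ LinearMap.ker g := by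
      refine ⟨sub_mem hu (U.smul_mem _ hu₀), ?_⟩
      simp [hgu₀]
    have := h hmem
    simp only [LinearMap.mem_ker, map_sub, map_smul, smul_eq_mul, sub_eq_zero] at this
    rw [this]; ring
  · push Not at hUg
    exact ⟨0, fun u hu => by simpa [hUg u hu] using h ⟨hu, hUg u hu⟩⟩

end Dual

section Face

variable {n : ℕ} {K : Set (Fin n → ℝ)} {v w : (Fin n → ℝ) →ₗ[ℝ] ℝ}

lemma faceOf_subset : faceOf K v ⊆ K := fun _ hx => hx.1

lemma vectorSpan_faceOf_le_ker : vectorSpan ℝ (faceOf K v) ≤ LinearMap.ker v := by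
  rw [vectorSpan_def, Submodule.span_le]
  rintro _ ⟨a, ha, b, hb, rfl⟩
  simp [le_antisymm (ha.2 b hb.1) (hb.2 a ha.1)]

lemma mem_faceOf_of_isMinOn_of_nonneg {c : ℝ} (hvw : ∀ u ∈ vectorSpan ℝ K, v u = c * w u)
    (hc : 0 ≤ c) {x : Fin n → ℝ} (hx : x ∈ K) (hmin : IsMinOn w K x) : x ∈ faceOf K v := by
  refine ⟨hx, fun y hy => ?_⟩
  have hvy := hvw _ (vsub_mem_vectorSpan ℝ hy hx)
  have hwy : w x ≤ w y := hmin hy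
  rw [vsub_eq_sub, map_sub, map_sub] at hvy
  nlinarith

lemma faceOf_eq_self_of_nonpos {c : ℝ} (hvw : ∀ u ∈ vectorSpan ℝ K, v u = c * w u)
    (hc : c ≤ 0) {x : Fin n → ℝ} (hx : x ∈ faceOf K v) (hmin : IsMinOn w K x) :
    faceOf K v = K := by
  refine faceOf_subset.antisymm fun y hy => ⟨hy, fun z hz => ?_⟩
  have hvy := hvw _ (vsub_mem_vectorSpan ℝ hy hx.1)
  have hwy : w x ≤ w y := hmin hy
  have hvz := hx.2 z hz
  rw [vsub_eq_sub, map_sub, map_sub] at hvy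
  nlinarith

end Face

lemma faceOf_chain_mono {n N : ℕ} {F : ℕ → Set (Fin n → ℝ)} {v : ℕ → (Fin n → ℝ) →ₗ[ℝ] ℝ}
    (hF : ∀ j : ℕ, 1 ≤ j → j ≤ N → F (j - 1) = faceOf (F j) (v j)) {j k : ℕ} (hjk : j ≤ k)
    (hkN : k ≤ N) : F j ⊆ F k := by
  induction k, hjk using Nat.le_induction with
  | base => exact subset_rfl
  | succ k hjk ih =>
    have hstep := hF (k + 1) (by omega) hkN
    rw [Nat.add_sub_cancel] at hstep
    exact (ih (by omega)).trans (hstep ▸ faceOf_subset)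

section Flag

variable {n : ℕ} {P : Fin (n + 1) → Set (Fin n → ℝ)} {Q : Fin (n + 1) → ℕ → Set (Fin n → ℝ)}

lemma le_finrank_vectorSpan_finsetSum (hQtop : ∀ i, Q i n = P i)
    (hflag : ∀ I : Finset (Fin (n + 1)), I.Nonempty → ∀ j : ℕ, j < n →
      finrank ℝ (vectorSpan ℝ (∑ i ∈ I, Q i j)) = j)
    (hessential : ∀ I : Finset (Fin (n + 1)), I.Nonempty → I ≠ Finset.univ →
      I.card ≤ finrank ℝ (vectorSpan ℝ (∑ i ∈ I, P i)))
    {s : ℕ} (hsn : s ≤ n) {I : Finset (Fin (n + 1))} (hI : I.card = s) :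
    s ≤ finrank ℝ (vectorSpan ℝ (∑ i ∈ I, Q i s)) := by
  rcases I.eq_empty_or_nonempty with rfl | hIne
  · simp [← hI]
  rcases hsn.lt_or_eq with hsn | rfl
  · exact (hflag I hIne s hsn).ge
  · rw [Finset.sum_congr rfl fun i _ => hQtop i]
    exact hI.ge.trans (hessential I hIne fun h => by simp [h] at hI)

lemma face_nonempty (hQtop : ∀ i, Q i n = P i)
    (hflag : ∀ I : Finset (Fin (n + 1)), I.Nonempty → ∀ j : ℕ, j < n →
      finrank ℝ (vectorSpan ℝ (∑ i ∈ I, Q i j)) = j)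
    (hP : ∀ i, (P i).Nonempty) {s : ℕ} (hs1 : 1 ≤ s) (hsn : s ≤ n) (i : Fin (n + 1)) :
    (Q i s).Nonempty := by
  rcases hsn.lt_or_eq with hsn | rfl
  · have hdim := hflag {i} (Finset.singleton_nonempty i) s hsn
    rw [Finset.sum_singleton] at hdim
    by_contra hempty
    rw [not_nonempty_iff_eq_empty.1 hempty, vectorSpan_empty, finrank_bot] at hdim
    omega
  · exact hQtop i ▸ hP i

lemma exists_first_nonconstant_level (hn : 1 ≤ n) (hQtop : ∀ i, Q i n = P i)
    (hflag : ∀ I : Finset (Fin (n + 1)), I.Nonempty → ∀ j : ℕ, j < n →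
      finrank ℝ (vectorSpan ℝ (∑ i ∈ I, Q i j)) = j)
    (hessential : ∀ I : Finset (Fin (n + 1)), I.Nonempty → I ≠ Finset.univ →
      I.card ≤ finrank ℝ (vectorSpan ℝ (∑ i ∈ I, P i)))
    {w : (Fin n → ℝ) →ₗ[ℝ] ℝ} (hw : w ≠ 0) :
    ∃ s, 1 ≤ s ∧ s ≤ n ∧ (∀ i, vectorSpan ℝ (Q i (s - 1)) ≤ LinearMap.ker w) ∧
      ∃ i, ¬vectorSpan ℝ (Q i s) ≤ LinearMap.ker w := by
  classical
  have htop : ∃ i, ¬vectorSpan ℝ (Q i n) ≤ LinearMap.ker w := by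
    by_contra! h
    have hI : (Finset.univ.erase (0 : Fin (n + 1))).card = n := by simp
    have hlow := le_finrank_vectorSpan_finsetSum hQtop hflag hessential le_rfl hI
    have hup := Submodule.finrank_mono
      (vectorSpan_finsetSum_le (Finset.univ.erase 0) (fun i => Q i n) fun i _ => h i)
    have hker := Module.Dual.finrank_ker_add_one_of_ne_zero hw
    rw [finrank_fin_fun] at hker
    omega
  have hex : ∃ s, ∃ i, ¬vectorSpan ℝ (Q i s) ≤ LinearMap.ker w := ⟨n, htop⟩
  have hbot : ∀ i, vectorSpan ℝ (Q i 0) ≤ LinearMap.ker w := fun i => by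
    have := hflag {i} (Finset.singleton_nonempty i) 0 hn
    rw [Finset.sum_singleton, Submodule.finrank_eq_zero] at this
    simp [this]
  have hpos : 1 ≤ Nat.find hex := (Nat.find_pos hex).2 fun ⟨i, hi⟩ => hi (hbot i)
  refine ⟨Nat.find hex, hpos, Nat.find_min' hex htop, fun i => ?_, Nat.find_spec hex⟩
  have := Nat.find_min hex (by omega : Nat.find hex - 1 < Nat.find hex)
  push Not at this
  exact this i

lemma exists_eq_mul_on_level {v : ℕ → (Fin n → ℝ) →ₗ[ℝ] ℝ}
    (hQstep : ∀ i, ∀ j : ℕ, 1 ≤ j → j ≤ n → Q i (j - 1) = faceOf (Q i j) (v j))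
    (hflag : ∀ I : Finset (Fin (n + 1)), I.Nonempty → ∀ j : ℕ, j < n →
      finrank ℝ (vectorSpan ℝ (∑ i ∈ I, Q i j)) = j)
    {s : ℕ} (hs1 : 1 ≤ s) (hsn : s ≤ n) (hne : ∀ i, (Q i s).Nonempty)
    {w : (Fin n → ℝ) →ₗ[ℝ] ℝ} (hbelow : ∀ i, vectorSpan ℝ (Q i (s - 1)) ≤ LinearMap.ker w)
    (habove : ∃ i, ¬vectorSpan ℝ (Q i s) ≤ LinearMap.ker w) :
    ∃ c : ℝ, ∀ i, ∀ u ∈ vectorSpan ℝ (Q i s), v s u = c * w u := by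
  set U := vectorSpan ℝ (∑ i, Q i s)
  set W := vectorSpan ℝ (∑ i, Q i (s - 1))
  have hQU : ∀ i, vectorSpan ℝ (Q i s) ≤ U := fun i =>
    vectorSpan_le_vectorSpan_finsetSum (fun i _ => hne i) (Finset.mem_univ i)
  have hWU : W ≤ U := vectorSpan_mono ℝ <|
    finsetSum_subset_finsetSum _ _ _ fun i _ => hQstep i s hs1 hsn ▸ faceOf_subset
  have hWw : W ≤ LinearMap.ker w := vectorSpan_finsetSum_le _ _ fun i _ => hbelow i
  have hWv : W ≤ LinearMap.ker (v s) := vectorSpan_finsetSum_le _ _ fun i _ =>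
    hQstep i s hs1 hsn ▸ vectorSpan_faceOf_le_ker
  have hUw : ¬U ≤ LinearMap.ker w := fun h =>
    habove.elim fun i hi => hi ((hQU i).trans h)
  have hdim : finrank ℝ U ≤ finrank ℝ W + 1 := by
    rw [hflag _ Finset.univ_nonempty (s - 1) (by omega)]
    rcases hsn.lt_or_eq with hsn | rfl
    · rw [hflag _ Finset.univ_nonempty s hsn]; omega
    · have := U.finrank_le; rw [finrank_fin_fun] at this; omega
  obtain ⟨c, hc⟩ := exists_eq_mul_of_inf_ker_le
    ((Submodule.inf_ker_le_of_finrank_le_succ hWU hWw hUw hdim).trans hWv)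
  exact ⟨c, fun i u hu => hc u (hQU i hu)⟩

lemma exists_lt_face_ne (hQtop : ∀ i, Q i n = P i)
    (hflag : ∀ I : Finset (Fin (n + 1)), I.Nonempty → ∀ j : ℕ, j < n →
      finrank ℝ (vectorSpan ℝ (∑ i ∈ I, Q i j)) = j)
    (hessential : ∀ I : Finset (Fin (n + 1)), I.Nonempty → I ≠ Finset.univ →
      I.card ≤ finrank ℝ (vectorSpan ℝ (∑ i ∈ I, P i)))
    (ε : Equiv.Perm (Fin (n + 1))) {s : ℕ} (hs1 : 1 ≤ s) (hsn : s ≤ n) :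
    ∃ j : Fin (n + 1), (j : ℕ) < s ∧ Q (ε j) (s - 1) ≠ Q (ε j) s := by
  by_contra! h
  let I := (Finset.univ : Finset (Fin s)).map ((Fin.castLEEmb (by omega)).trans ε.toEmbedding)
  have hI : I.card = s := by simp [I]
  have hsum : ∑ i ∈ I, Q i (s - 1) = ∑ i ∈ I, Q i s := Finset.sum_congr rfl fun i hi => by
    obtain ⟨j, -, rfl⟩ := Finset.mem_map.1 hi
    exact h _ (by simp)
  have hlow := le_finrank_vectorSpan_finsetSum hQtop hflag hessential hsn hI
  rw [← hsum, hflag I (Finset.card_pos.1 (by omega)) (s - 1) (by omega)] at hlow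
  omega

end Flag

/-- Let `n ≥ 1` and let `P₀, …, P_n` be polytopes in `ℝⁿ` sharing a complete flag of
faces: with linear functionals `v₁, …, v_n`, set `Pᵢⁿ = Pᵢ` and
`Pᵢ^{j-1} = F(Pᵢʲ, v_j)` (here `Q i j = Pᵢʲ`), and assume that for every nonempty
`I ⊆ {0, …, n}` and every `0 ≤ j ≤ n - 1` the affine span of `∑_{i ∈ I} Pᵢʲ` has
dimension exactly `j`. Assume moreover that the family is essential: for every
nonempty proper `I ⊊ {0, …, n}` the affine span of `∑_{i ∈ I} Pᵢ` has dimension at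
least `|I|`. Then for every permutation `ε` of `{0, …, n}` and all points `m_j` with
`m_j ∈ P_{ε(j)}ʲ` and `m_j ∉ P_{ε(j)}^{j-1}` (for `j ≥ 1`), the sum `m₀ + ⋯ + m_n`
lies in the interior of `P₀ + ⋯ + P_n`. -/
theorem locally_unmixed_partition_compatible {n : ℕ} (hn : 1 ≤ n)
    (S : Fin (n + 1) → Finset (Fin n → ℝ)) (hS : ∀ i, (S i).Nonempty)
    (P : Fin (n + 1) → Set (Fin n → ℝ))
    (hP : ∀ i, P i = convexHull ℝ ((S i : Set (Fin n → ℝ))))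
    (v : ℕ → ((Fin n → ℝ) →ₗ[ℝ] ℝ))
    (Q : Fin (n + 1) → ℕ → Set (Fin n → ℝ))
    (hQtop : ∀ i, Q i n = P i)
    (hQstep : ∀ i, ∀ j : ℕ, 1 ≤ j → j ≤ n → Q i (j - 1) = faceOf (Q i j) (v j))
    (hflag : ∀ I : Finset (Fin (n + 1)), I.Nonempty → ∀ j : ℕ, j < n →
      Module.finrank ℝ (affineSpan ℝ (∑ i ∈ I, Q i j)).direction = j)
    (hessential : ∀ I : Finset (Fin (n + 1)), I.Nonempty → I ≠ Finset.univ →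
      I.card ≤ Module.finrank ℝ (affineSpan ℝ (∑ i ∈ I, P i)).direction)
    (ε : Equiv.Perm (Fin (n + 1))) (m : Fin (n + 1) → (Fin n → ℝ))
    (hm : ∀ j : Fin (n + 1), m j ∈ Q (ε j) (j : ℕ))
    (hm' : ∀ j : Fin (n + 1), 1 ≤ (j : ℕ) → m j ∉ Q (ε j) ((j : ℕ) - 1)) :
    ∑ j, m j ∈ interior (∑ i, P i) := by
  replace hflag : ∀ I : Finset (Fin (n + 1)), I.Nonempty → ∀ j : ℕ, j < n →
      finrank ℝ (vectorSpan ℝ (∑ i ∈ I, Q i j)) = j := fun I hI j hj =>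
    direction_affineSpan ℝ (∑ i ∈ I, Q i j) ▸ hflag I hI j hj
  replace hessential : ∀ I : Finset (Fin (n + 1)), I.Nonempty → I ≠ Finset.univ →
      I.card ≤ finrank ℝ (vectorSpan ℝ (∑ i ∈ I, P i)) := fun I hI hIu =>
    direction_affineSpan ℝ (∑ i ∈ I, P i) ▸ hessential I hI hIu
  have hmP : ∀ j : Fin (n + 1), m j ∈ P (ε j) := fun j =>
    hQtop (ε j) ▸ faceOf_chain_mono (hQstep (ε j)) (Nat.lt_succ_iff.1 j.isLt) le_rfl (hm j)
  have hPne : ∀ i, (P i).Nonempty := fun i => hP i ▸ convexHull_nonempty_iff.2 (hS i)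
  have hconv : Convex ℝ (∑ i, P i) := convex_sum _ fun i _ => hP i ▸ convex_convexHull ℝ _
  have hsum : ∑ j, m j ∈ ∑ i, P i :=
    Equiv.sum_comp ε P ▸ finsetSum_mem_finsetSum _ _ _ fun j _ => hmP j
  by_contra hx
  obtain ⟨w, hw, hmin⟩ := hconv.exists_ne_zero_isMinOn_of_notMem_interior hsum hx
  rw [← Equiv.sum_comp ε P] at hmin
  have hminj : ∀ j, IsMinOn w (P (ε j)) (m j) := fun j =>
    hmin.of_finsetSum (fun j _ => hmP j) (Finset.mem_univ j)
  obtain ⟨s, hs1, hsn, hbelow, habove⟩ := exists_first_nonconstant_level hn hQtop hflag hessential hw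
  obtain ⟨c, hc⟩ := exists_eq_mul_on_level hQstep hflag hs1 hsn
    (fun i => face_nonempty hQtop hflag hPne hs1 hsn i) hbelow habove
  have hQP : ∀ i, Q i s ⊆ P i := fun i => hQtop i ▸ faceOf_chain_mono (hQstep i) hsn le_rfl
  rcases le_or_gt c 0 with hc0 | hc0
  · obtain ⟨j, hjs, hj⟩ := exists_lt_face_ne hQtop hflag hessential ε hs1 hsn
    have hmj : m j ∈ Q (ε j) (s - 1) :=
      faceOf_chain_mono (hQstep (ε j)) (by omega) (by omega) (hm j)
    rw [hQstep _ s hs1 hsn] at hmj hj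
    exact hj (faceOf_eq_self_of_nonpos (hc (ε j)) hc0 hmj ((hminj j).on_subset (hQP _)))
  · let j : Fin (n + 1) := ⟨s, by omega⟩
    apply hm' j hs1
    rw [hQstep _ s hs1 hsn]
    exact mem_faceOf_of_isMinOn_of_nonneg (hc _) hc0.le (hm j) ((hminj j).on_subset (hQP _))
end

section
/- Let u, v ∈ ℝ² be linearly independent vectors, and let a, b > 0 be real numbers. Let P₀ be the segment with endpoints 0 and u, P₁ the segment with endpoints 0 and v, and P₂ the parallelogram conv{0, a·u, b·v, a·u + b·v}, and let P = P₀ + P₁ + P₂ = {s·u + t·v : 0 ≤ s ≤ 1 + a, 0 ≤ t ≤ 1 + b}. Then for each vertex x ∈ {0, u} of P₀ and each vertex y ∈ {0, v} of P₁, there is exactly one vertex w ∈ {0, a·u, b·v, a·u + b·v} of P₂ such that x + y + w lies in the interior of P. -/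
/-!
In the coordinates `(s, t) ↦ s • u + t • v`, which form a linear isomorphism `ℝ × ℝ ≃ E`, the
three summands are the boxes `[0,1] × {0}`, `{0} × [0,1]` and `[0,a] × [0,b]`, so `P` is the box
`[0,1+a] × [0,1+b]` and its interior is the open box. The vertex `x + y + w` has coordinates
`(c + d₁, d + d₂)` with `c, d ∈ {0, 1}` and `d₁ ∈ {0, a}`, `d₂ ∈ {0, b}`; each coordinate lies
strictly inside its interval for exactly one choice (`d₁ = a` iff `c = 0`, and likewise for `d₂`).
-/

open Pointwise Set Module

section Icc

variable {α : Type*} [AddCommGroup α] [LinearOrder α] [IsOrderedAddMonoid α]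

theorem Icc_zero_add_Icc_zero {c d : α} (hc : 0 ≤ c) (hd : 0 ≤ d) :
    Icc 0 c + Icc 0 d = Icc 0 (c + d) := by
  refine subset_antisymm (by simpa using Icc_add_Icc_subset (0 : α) c 0 d) fun z ⟨hz₀, hz⟩ ↦ ?_
  refine ⟨min z c, ⟨le_min hz₀ hc, min_le_right _ _⟩, z - min z c, ⟨?_, ?_⟩, add_sub_cancel _ _⟩
  · exact sub_nonneg.2 (min_le_left _ _)
  · rcases le_total z c with h | h
    · rw [min_eq_left h, sub_self]; exact hd
    · rw [min_eq_right h, sub_le_iff_le_add']; exact hz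

end Icc

theorem Function.Injective.existsUnique_mem_image {α β : Type*} {f : α → β}
    (hf : Function.Injective f) {s : Set α} {p : β → Prop} :
    (∃! y, y ∈ f '' s ∧ p y) ↔ ∃! x, x ∈ s ∧ p (f x) := by
  constructor
  · rintro ⟨_, ⟨⟨x, hx, rfl⟩, hpx⟩, huniq⟩
    exact ⟨x, ⟨hx, hpx⟩, fun x' hx' ↦ hf (huniq _ ⟨mem_image_of_mem f hx'.1, hx'.2⟩)⟩
  · rintro ⟨x, ⟨hx, hpx⟩, huniq⟩
    refine ⟨f x, ⟨mem_image_of_mem f hx, hpx⟩, ?_⟩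
    rintro _ ⟨⟨x', hx', rfl⟩, hpx'⟩
    rw [huniq x' ⟨hx', hpx'⟩]

theorem existsUnique_add_mem_prod {α β : Type*} [Add α] [Add β] {s S : Set α} {t T : Set β}
    {c : α} {d : β} (hs : ∃! x, x ∈ s ∧ c + x ∈ S) (ht : ∃! y, y ∈ t ∧ d + y ∈ T) :
    ∃! z, z ∈ s ×ˢ t ∧ (c, d) + z ∈ S ×ˢ T := by
  obtain ⟨x, ⟨hxs, hxS⟩, hx⟩ := hs
  obtain ⟨y, ⟨hyt, hyT⟩, hy⟩ := ht
  exact ⟨(x, y), ⟨⟨hxs, hyt⟩, hxS, hyT⟩,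
    fun z ⟨⟨hzs, hzt⟩, hzS, hzT⟩ ↦ Prod.ext (hx _ ⟨hzs, hzS⟩) (hy _ ⟨hzt, hzT⟩)⟩

theorem existsUnique_add_mem_Ioo {c a : ℝ} (hc : c ∈ ({0, 1} : Set ℝ)) (ha : 0 < a) :
    ∃! d, d ∈ ({0, a} : Set ℝ) ∧ c + d ∈ Ioo 0 (1 + a) := by
  rcases hc with rfl | rfl
  · refine ⟨a, ⟨by simp, by constructor <;> linarith⟩, ?_⟩
    rintro d ⟨rfl | rfl, h⟩
    · simp at h
    · rfl
  · refine ⟨0, ⟨by simp, by constructor <;> linarith⟩, ?_⟩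
    rintro d ⟨rfl | rfl, h⟩
    · rfl
    · simp at h

theorem LinearMap.interior_image_of_bijective {V W : Type*} [NormedAddCommGroup V]
    [NormedSpace ℝ V] [FiniteDimensional ℝ V] [NormedAddCommGroup W] [NormedSpace ℝ W]
    {f : V →ₗ[ℝ] W} (hf : Function.Bijective f) (s : Set V) :
    interior (f '' s) = f '' interior s :=
  ((LinearEquiv.ofBijective f hf).toContinuousLinearEquiv.toHomeomorph.image_interior s).symm

section pairMap

variable {E : Type*} [AddCommGroup E] [Module ℝ E]

noncomputable def pairMap (u v : E) : ℝ × ℝ →ₗ[ℝ] E :=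
  (LinearMap.toSpanSingleton ℝ E u).coprod (LinearMap.toSpanSingleton ℝ E v)

@[simp]
theorem pairMap_apply (u v : E) (p : ℝ × ℝ) : pairMap u v p = p.1 • u + p.2 • v := rfl

theorem pairMap_bijective [FiniteDimensional ℝ E] {u v : E} (huv : LinearIndependent ℝ ![u, v])
    (hE : finrank ℝ E = 2) : Function.Bijective (pairMap u v) := by
  have hinj : Function.Injective (pairMap u v) := (injective_iff_map_eq_zero _).2
    fun p hp ↦ Prod.ext_iff.2 (LinearIndependent.pair_iff.1 huv p.1 p.2 hp)
  exact ⟨hinj, (LinearMap.injective_iff_surjective_of_finrank_eq_finrank (by simp [hE])).1 hinj⟩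

theorem image_pairMap_prod_pair (u v : E) (c d : ℝ) :
    pairMap u v '' ({0, c} ×ˢ {0, d}) = {0, c • u, d • v, c • u + d • v} := by
  simp only [insert_prod, singleton_prod, image_insert_eq, image_union, image_singleton,
    pairMap_apply, zero_smul, add_zero, zero_add]
  ext
  simp only [mem_union, mem_insert_iff, mem_singleton_iff]
  tauto

theorem convexHull_parallelogram (u v : E) {c d : ℝ} (hc : 0 ≤ c) (hd : 0 ≤ d) :
    convexHull ℝ {0, c • u, d • v, c • u + d • v} = pairMap u v '' (Icc 0 c ×ˢ Icc 0 d) := by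
  rw [← image_pairMap_prod_pair, ← LinearMap.image_convexHull, convexHull_prod, convexHull_pair,
    convexHull_pair, segment_eq_Icc hc, segment_eq_Icc hd]

theorem convexHull_add_convexHull_add_parallelogram (u v : E) {a b : ℝ} (ha : 0 ≤ a)
    (hb : 0 ≤ b) :
    convexHull ℝ {0, u} + convexHull ℝ {0, v} + convexHull ℝ {0, a • u, b • v, a • u + b • v} =
      pairMap u v '' (Icc 0 (1 + a) ×ˢ Icc 0 (1 + b)) := by
  have h₀ : convexHull ℝ {0, u} = pairMap u v '' (Icc 0 1 ×ˢ Icc 0 0) := by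
    simpa using convexHull_parallelogram u v zero_le_one le_rfl
  have h₁ : convexHull ℝ {0, v} = pairMap u v '' (Icc 0 0 ×ˢ Icc 0 1) := by
    simpa using convexHull_parallelogram u v le_rfl zero_le_one
  rw [h₀, h₁, convexHull_parallelogram u v ha hb, ← image_add, ← image_add, prod_add_prod_comm,
    prod_add_prod_comm, Icc_zero_add_Icc_zero, Icc_zero_add_Icc_zero, Icc_zero_add_Icc_zero,
    Icc_zero_add_Icc_zero, add_zero, zero_add] <;> linarith

end pairMap

/-- Let `u, v ∈ ℝ²` be linearly independent, `a, b > 0`, and let `P₀ = conv{0, u}`,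
`P₁ = conv{0, v}`, `P₂ = conv{0, a•u, b•v, a•u + b•v}`, `P = P₀ + P₁ + P₂`. Then for
each vertex `x ∈ {0, u}` of `P₀` and each vertex `y ∈ {0, v}` of `P₁` there is exactly
one vertex `w` of `P₂` such that `x + y + w` lies in the interior of `P`. -/
theorem exceptional_unique_vertex (u v : Fin 2 → ℝ)
    (huv : LinearIndependent ℝ ![u, v]) (a b : ℝ) (ha : 0 < a) (hb : 0 < b)
    (P₀ P₁ P₂ P : Set (Fin 2 → ℝ))
    (hP₀ : P₀ = convexHull ℝ {0, u})
    (hP₁ : P₁ = convexHull ℝ {0, v})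
    (hP₂ : P₂ = convexHull ℝ {0, a • u, b • v, a • u + b • v})
    (hP : P = P₀ + P₁ + P₂) :
    ∀ x ∈ ({0, u} : Set (Fin 2 → ℝ)), ∀ y ∈ ({0, v} : Set (Fin 2 → ℝ)),
      ∃! w : Fin 2 → ℝ, w ∈ ({0, a • u, b • v, a • u + b • v} : Set (Fin 2 → ℝ)) ∧
        x + y + w ∈ interior P := by
  intro x hx y hy
  have hφ : Function.Bijective (pairMap u v) := pairMap_bijective huv (by simp)
  have hint : interior P = pairMap u v '' (Ioo 0 (1 + a) ×ˢ Ioo 0 (1 + b)) := by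
    rw [hP, hP₀, hP₁, hP₂, convexHull_add_convexHull_add_parallelogram u v ha.le hb.le,
      LinearMap.interior_image_of_bijective hφ, interior_prod_eq, interior_Icc, interior_Icc]
  obtain ⟨c, hc, rfl⟩ : ∃ c ∈ ({0, 1} : Set ℝ), pairMap u v (c, 0) = x := by
    rcases hx with rfl | rfl
    exacts [⟨0, by simp, by simp⟩, ⟨1, by simp, by simp⟩]
  obtain ⟨d, hd, rfl⟩ : ∃ d ∈ ({0, 1} : Set ℝ), pairMap u v (0, d) = y := by
    rcases hy with rfl | rfl
    exacts [⟨0, by simp, by simp⟩, ⟨1, by simp, by simp⟩]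
  rw [hint, ← image_pairMap_prod_pair, hφ.1.existsUnique_mem_image]
  simp only [← map_add, hφ.1.mem_set_image, Prod.mk_add_mk, add_zero, zero_add]
  exact existsUnique_add_mem_prod (existsUnique_add_mem_Ioo hc ha) (existsUnique_add_mem_Ioo hd hb)
end

section
/- Let u, v ∈ ℝ² be linearly independent vectors and a, b > 0 real numbers. Let P₀ = conv{0, u}, P₁ = conv{0, v}, P₂ = conv{0, a·u, b·v, a·u + b·v}, and P = P₀ + P₁ + P₂. Suppose V_{ij} (0 ≤ i, j ≤ 2) is a compatible collection of vertex partitions: the vertex set {0, u} of P₀ is the disjoint union V₀₀ ⊔ V₀₁ ⊔ V₀₂, the vertex set {0, v} of P₁ is V₁₀ ⊔ V₁₁ ⊔ V₁₂, the vertex set {0, a·u, b·v, a·u + b·v} of P₂ is V₂₀ ⊔ V₂₁ ⊔ V₂₂, and for every permutation ε of {0, 1, 2} the Minkowski sum V_{ε(0)0} + V_{ε(1)1} + V_{ε(2)2} is contained in the interior of P. Then for every permutation ε of {0, 1, 2} there exists some i with V_{ε(i)i} = ∅. (Consequently, in the exceptional two-dimensional case every compatible vertex partition yields a residue matrix whose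 determinant is identically zero.) -/
open Pointwise Set Function

/-!
Take linear functionals `f, g` with `f u = g v = 1` and `f v = g u = 0`. On `P` they take values
in `[0, 1 + a]` and `[0, 1 + b]`, so for vertices `x₀, x₁, x₂` of `P₀, P₁, P₂` the point
`x₀ + x₁ + x₂` is extremal for `f`, hence not interior, as soon as `x₀` and `x₂` are both on the
`f = 0` side or both on the far side; likewise for `g`, `x₁` and `x₂`. By compatibility, three
vertices in pairwise distinct columns never sum to such a point, so the only candidates are
triples in which `x₂` is the vertex of `P₂` opposite to `x₀ + x₁`. If all `V_{ε(i)i}` were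
nonempty, such a triple would exist, and a case analysis on the columns of the other vertices
rules it out.
-/

lemma injective_vec3_iff_ne {α : Type*} {x y z : α} :
    Injective ![x, y, z] ↔ x ≠ y ∧ x ≠ z ∧ y ≠ z := by
  refine ⟨fun h ↦ ⟨h.ne (a₁ := 0) (a₂ := 1) (by decide), h.ne (a₁ := 0) (a₂ := 2) (by decide),
    h.ne (a₁ := 1) (a₂ := 2) (by decide)⟩, fun h i j hij ↦ ?_⟩
  fin_cases i <;> fin_cases j <;> simp_all [eq_comm]

/-- With `A = c₀ s`, `B = c₁ t`, `C = c₂ (!s, !t)` distinct, the hypothesis forces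
`c₁ !t ∈ {A, C}` and `c₀ !s ∈ {B, C}`, and each of the four cases is refuted by the twelve
instances of the hypothesis listed in the proof. -/
lemma not_injective_of_forall_eq_or_eq {α : Type*} {c₀ c₁ : Bool → α} {c₂ : Bool × Bool → α}
    (h : ∀ s t p, (s = p.1 ∨ t = p.2) → ¬Injective ![c₀ s, c₁ t, c₂ p])
    (s t : Bool) (p : Bool × Bool) : ¬Injective ![c₀ s, c₁ t, c₂ p] := by
  obtain ⟨s', t'⟩ := p
  by_cases hs : s = s'
  · exact h _ _ _ (.inl hs)
  by_cases ht : t = t'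
  · exact h _ _ _ (.inr ht)
  obtain rfl : s' = !s := by cases s <;> cases s' <;> simp_all
  obtain rfl : t' = !t := by cases t <;> cases t' <;> simp_all
  simp only [injective_vec3_iff_ne] at h ⊢
  have := h s t (s, t) (.inl rfl); have := h s t (s, !t) (.inl rfl)
  have := h s t (!s, t) (.inr rfl); have := h s (!t) (s, t) (.inl rfl)
  have := h s (!t) (s, !t) (.inl rfl); have := h s (!t) (!s, !t) (.inr rfl)
  have := h (!s) t (s, t) (.inr rfl); have := h (!s) t (!s, t) (.inl rfl)
  have := h (!s) t (!s, !t) (.inl rfl); have := h (!s) (!t) (s, !t) (.inr rfl)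
  have := h (!s) (!t) (!s, t) (.inl rfl); have := h (!s) (!t) (!s, !t) (.inl rfl)
  grind

lemma exists_column {E ι : Type*} {W : Fin 3 → Set E} {x : ι → E}
    (hW : W 0 ∪ W 1 ∪ W 2 = range x) (hdisj : ∀ j k, j ≠ k → W j ∩ W k = ∅) :
    ∃ c : ι → Fin 3, (∀ i, x i ∈ W (c i)) ∧ ∀ j, (W j).Nonempty → ∃ i, c i = j := by
  have hmem (y : E) (hy : y ∈ range x) : ∃ j, y ∈ W j := by
    rw [← hW] at hy
    rcases hy with (hy | hy) | hy
    exacts [⟨0, hy⟩, ⟨1, hy⟩, ⟨2, hy⟩]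
  choose c hc using fun i => hmem (x i) (mem_range_self i)
  refine ⟨c, hc, fun j ⟨y, hy⟩ => ?_⟩
  have hsub : W j ⊆ range x := by
    rw [← hW]
    fin_cases j
    exacts [subset_union_left.trans subset_union_left, subset_union_right.trans subset_union_left,
      subset_union_right]
  obtain ⟨i, rfl⟩ := hsub hy
  refine ⟨i, by_contra fun hne => ?_⟩
  exact (hdisj _ _ hne).subset ⟨hc i, hy⟩

lemma exists_perm_add_mem {E : Type*} [AddCommMonoid E] {V : Fin 3 → Fin 3 → Set E}
    {j : Fin 3 → Fin 3} (hj : Injective j) {w : Fin 3 → E} (hw : ∀ k, w k ∈ V k (j k)) :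
    ∃ ε : Equiv.Perm (Fin 3), w 0 + w 1 + w 2 ∈ V (ε 0) 0 + V (ε 1) 1 + V (ε 2) 2 := by
  let ε := (Equiv.ofBijective j hj.bijective_of_finite).symm
  have hε (i : Fin 3) : w (ε i) ∈ V (ε i) i := by
    simpa only [ε, Equiv.ofBijective_apply_symm_apply] using hw (ε i)
  have hsum : w 0 + w 1 + w 2 = w (ε 0) + w (ε 1) + w (ε 2) := by
    simpa only [Fin.sum_univ_three] using (ε.sum_comp w).symm
  exact ⟨ε, hsum ▸ add_mem_add (add_mem_add (hε 0) (hε 1)) (hε 2)⟩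

lemma LinearIndependent.exists_linearMap_apply_eq_single {K V ι : Type*} [Field K]
    [AddCommGroup V] [Module K V] [DecidableEq ι] {x : ι → V} (hx : LinearIndependent K x)
    (i : ι) : ∃ f : V →ₗ[K] K, ∀ j, f (x j) = (Pi.single i 1 : ι → K) j := by
  obtain ⟨f, hf⟩ := LinearMap.exists_extend ((Module.Basis.span hx).coord i)
  refine ⟨f, fun j => ?_⟩
  simpa [Module.Basis.span_apply, Finsupp.single_apply, Pi.single_apply, eq_comm] using
    LinearMap.congr_fun hf (Module.Basis.span hx j)

lemma range_cond_zero {M : Type*} [Zero M] (x : M) :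
    range (fun s : Bool => bif s then x else 0) = {0, x} := by
  ext
  simp [eq_comm]

lemma range_cond_add_cond {M : Type*} [AddZeroClass M] (x y : M) :
    range (fun p : Bool × Bool => (bif p.1 then x else 0) + (bif p.2 then y else 0)) =
      {0, x, y, x + y} := by
  ext
  simp only [mem_range, Prod.exists, Bool.exists_bool, cond_false, cond_true, add_zero,
    zero_add, mem_insert_iff, mem_singleton_iff, eq_comm]
  tauto

section Geometry

variable {E : Type*} [AddCommGroup E] [Module ℝ E]

lemma mapsTo_convexHull_Icc {f : E →ₗ[ℝ] ℝ} {s : Set E} {m M : ℝ} (h : MapsTo f s (Icc m M)) :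
    MapsTo f (convexHull ℝ s) (Icc m M) :=
  convexHull_min h ((convex_Icc m M).linear_preimage f)

lemma mapsTo_add_Icc {f : E →ₗ[ℝ] ℝ} {A B : Set E} {a₁ a₂ b₁ b₂ : ℝ}
    (hA : MapsTo f A (Icc a₁ a₂)) (hB : MapsTo f B (Icc b₁ b₂)) :
    MapsTo f (A + B) (Icc (a₁ + b₁) (a₂ + b₂)) := by
  rintro _ ⟨x, hx, y, hy, rfl⟩
  rw [map_add]
  exact Icc_add_Icc_subset _ _ _ _ (add_mem_add (hA hx) (hB hy))

variable {u v : E} {a b : ℝ}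

lemma mapsTo_Icc_of_apply_eq {f : E →ₗ[ℝ] ℝ} (hfu : f u = 1) (hfv : f v = 0) (ha : 0 ≤ a) :
    MapsTo f (convexHull ℝ {0, u} + convexHull ℝ {0, v} +
      convexHull ℝ {0, a • u, b • v, a • u + b • v}) (Icc 0 (1 + a)) := by
  have h₀ : MapsTo f {0, u} (Icc 0 1) := by simp [MapsTo, hfu]
  have h₁ : MapsTo f {0, v} (Icc 0 0) := by simp [MapsTo, hfv]
  have h₂ : MapsTo f {0, a • u, b • v, a • u + b • v} (Icc 0 a) := by simp [MapsTo, hfu, hfv, ha]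
  simpa using mapsTo_add_Icc (mapsTo_add_Icc (mapsTo_convexHull_Icc h₀)
    (mapsTo_convexHull_Icc h₁)) (mapsTo_convexHull_Icc h₂)

variable [TopologicalSpace E] [ContinuousAdd E] [ContinuousSMul ℝ E]

lemma notMem_interior_of_isExtrOn {f : E →ₗ[ℝ] ℝ} {w : E} (hw : f w ≠ 0)
    {S : Set E} {q : E} (h : IsExtrOn f S q) : q ∉ interior S := by
  intro hq
  have hline : IsLocalExtr (fun t : ℝ => f (q + t • w)) 0 := by
    refine IsLocalExtr.comp_continuous (f := f) (g := fun t : ℝ => q + t • w) ?_ (by fun_prop)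
    simpa using h.isLocalExtr (mem_interior_iff_mem_nhds.1 hq)
  have hderiv : HasDerivAt (fun t : ℝ => f (q + t • w)) (f w) 0 := by
    simp only [map_add, map_smul, smul_eq_mul]
    simpa using ((hasDerivAt_id (0 : ℝ)).mul_const (f w)).const_add (f q)
  exact hw (hline.hasDerivAt_eq_zero hderiv)

lemma add_vertices_notMem_interior_of_fst_eq {f : E →ₗ[ℝ] ℝ} (hfu : f u = 1) (hfv : f v = 0)
    (ha : 0 ≤ a) (s t t' : Bool) :
    (bif s then u else 0) + (bif t then v else 0) +
        ((bif s then a • u else 0) + (bif t' then b • v else 0)) ∉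
      interior (convexHull ℝ {0, u} + convexHull ℝ {0, v} +
        convexHull ℝ {0, a • u, b • v, a • u + b • v}) := by
  have hP := mapsTo_Icc_of_apply_eq (b := b) hfu hfv ha
  refine notMem_interior_of_isExtrOn (f := f) (w := u) (by simp [hfu]) ?_
  have hfq : f ((bif s then u else 0) + (bif t then v else 0) +
      ((bif s then a • u else 0) + (bif t' then b • v else 0))) = bif s then 1 + a else 0 := by
    cases s <;> cases t <;> cases t' <;> simp [hfu, hfv]
  cases s
  · exact IsMinOn.isExtr fun p hp => hfq.trans_le (hP hp).1
  · exact IsMaxOn.isExtr fun p hp => (hP hp).2.trans_eq hfq.symm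

lemma add_vertices_notMem_interior (huv : LinearIndependent ℝ ![u, v]) (ha : 0 ≤ a) (hb : 0 ≤ b)
    {s t : Bool} {p : Bool × Bool} (h : s = p.1 ∨ t = p.2) :
    (bif s then u else 0) + (bif t then v else 0) +
        ((bif p.1 then a • u else 0) + (bif p.2 then b • v else 0)) ∉
      interior (convexHull ℝ {0, u} + convexHull ℝ {0, v} +
        convexHull ℝ {0, a • u, b • v, a • u + b • v}) := by
  obtain ⟨f, hf⟩ := huv.exists_linearMap_apply_eq_single 0
  obtain ⟨g, hg⟩ := huv.exists_linearMap_apply_eq_single 1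
  obtain ⟨s', t'⟩ := p
  dsimp only at h ⊢
  rcases h with rfl | rfl
  · exact add_vertices_notMem_interior_of_fst_eq (by simpa using hf 0) (by simpa using hf 1) ha
      s t t'
  · have key := add_vertices_notMem_interior_of_fst_eq (u := v) (v := u) (a := b) (b := a)
      (by simpa using hg 1) (by simpa using hg 0) hb t s s'
    rw [add_comm (convexHull ℝ {0, v}), insert_comm (b • v), add_comm (b • v)] at key
    convert key using 2
    abel

end Geometry

/-- **The exceptional case in dimension two.** Let `u, v ∈ ℝ²` be linearly independent,
`a, b > 0`, and let `P₀ = conv{0, u}`, `P₁ = conv{0, v}`,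
`P₂ = conv{0, a•u, b•v, a•u + b•v}`, `P = P₀ + P₁ + P₂`. Suppose `V i j` is a
compatible collection of vertex partitions: the vertex set of each `Pᵢ` is the
disjoint union `V i 0 ⊔ V i 1 ⊔ V i 2`, and for every permutation `ε` of `{0, 1, 2}`
the Minkowski sum `V (ε 0) 0 + V (ε 1) 1 + V (ε 2) 2` is contained in the interior of
`P`. Then for every permutation `ε` of `{0, 1, 2}` some `V (ε i) i` is empty; hence
every compatible vertex partition yields a residue matrix with determinant zero. -/
theorem exceptional_no_partition (u v : Fin 2 → ℝ)
    (huv : LinearIndependent ℝ ![u, v]) (a b : ℝ) (ha : 0 < a) (hb : 0 < b)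
    (P₀ P₁ P₂ P : Set (Fin 2 → ℝ))
    (hP₀ : P₀ = convexHull ℝ {0, u})
    (hP₁ : P₁ = convexHull ℝ {0, v})
    (hP₂ : P₂ = convexHull ℝ {0, a • u, b • v, a • u + b • v})
    (hP : P = P₀ + P₁ + P₂)
    (V : Fin 3 → Fin 3 → Set (Fin 2 → ℝ))
    (hV₀ : V 0 0 ∪ V 0 1 ∪ V 0 2 = ({0, u} : Set (Fin 2 → ℝ)))
    (hV₁ : V 1 0 ∪ V 1 1 ∪ V 1 2 = ({0, v} : Set (Fin 2 → ℝ)))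
    (hV₂ : V 2 0 ∪ V 2 1 ∪ V 2 2 =
      ({0, a • u, b • v, a • u + b • v} : Set (Fin 2 → ℝ)))
    (hdisj : ∀ i j k : Fin 3, j ≠ k → V i j ∩ V i k = ∅)
    (hcompat : ∀ ε : Equiv.Perm (Fin 3),
      V (ε 0) 0 + V (ε 1) 1 + V (ε 2) 2 ⊆ interior P) :
    ∀ ε : Equiv.Perm (Fin 3), ∃ i : Fin 3, V (ε i) i = ∅ := by
  subst hP₀ hP₁ hP₂ hP
  intro ε
  by_contra! hne
  obtain ⟨c₀, hx₀, hc₀⟩ := exists_column (hV₀.trans (range_cond_zero u).symm) (hdisj 0)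
  obtain ⟨c₁, hx₁, hc₁⟩ := exists_column (hV₁.trans (range_cond_zero v).symm) (hdisj 1)
  obtain ⟨c₂, hx₂, hc₂⟩ := exists_column (hV₂.trans (range_cond_add_cond _ _).symm) (hdisj 2)
  have hboundary : ∀ s t p, (s = p.1 ∨ t = p.2) → ¬Injective ![c₀ s, c₁ t, c₂ p] := by
    intro s t p hst hinj
    obtain ⟨σ, hσ⟩ := exists_perm_add_mem hinj (w := ![_, _, _])
      (fun k => by fin_cases k; exacts [hx₀ s, hx₁ t, hx₂ p])
    exact add_vertices_notMem_interior huv ha.le hb.le hst (hcompat σ hσ)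
  obtain ⟨s, hs⟩ := hc₀ (ε.symm 0) (by simpa using hne (ε.symm 0))
  obtain ⟨t, ht⟩ := hc₁ (ε.symm 1) (by simpa using hne (ε.symm 1))
  obtain ⟨p, hp⟩ := hc₂ (ε.symm 2) (by simpa using hne (ε.symm 2))
  refine not_injective_of_forall_eq_or_eq hboundary s t p ?_
  rw [hs, ht, hp, injective_vec3_iff_ne]
  simp
end
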